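/- arXiv:2202.08573 — 7 statements merged into one kernel-verified Lean document; each statement's English description precedes it below -/
import Mathlib

section
/- Let Λ = (λ₁,…,λ_p) with λ₁ ≥ … ≥ λ_p ≥ 0 and let C_Λ = {π ∈ ℝ^p : Σ_{j≤i} |π|_{(j)} ≤ Σ_{j≤i} λ_j for all i = 1,…,p}, where |π|_{(1)} ≥ … ≥ |π|_{(p)} is the decreasing rearrangement of absolute values of coordinates of π. Then for every b ∈ ℝ^p, J_Λ(b) = max_{π ∈ C_Λ} π′b. -/
open Matrix

/-- The SLOPE (sorted ℓ₁) norm `J_Λ(b) = ∑ Λᵢ |b|₍ᵢ₎`, expressed (for `Λ` sorted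
in decreasing order) as the maximum over permutations of `∑ Λᵢ |b (σ i)|`,
which equals the pairing of `Λ` with the decreasing rearrangement of `|b|`. -/
noncomputable def slopeNorm {p : ℕ} (Λ : Fin p → ℝ) (b : Fin p → ℝ) : ℝ :=
  ⨆ σ : Equiv.Perm (Fin p), ∑ i, Λ i * |b (σ i)|

/-- The unit ball `C_Λ` of the dual SLOPE norm: the set of `π` such that for every
`k`, the sum of the `k` largest values among `|π j|` is at most the sum of the `k`
largest entries of `Λ` (the first `k` entries, as `Λ` is sorted decreasingly).
The condition is expressed by quantifying over all finite index sets `S`. -/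
def dualBall {p : ℕ} (Λ : Fin p → ℝ) : Set (Fin p → ℝ) :=
  {π | ∀ S : Finset (Fin p),
    ∑ j ∈ S, |π j| ≤ ∑ j ∈ Finset.univ.filter (fun j : Fin p => (j : ℕ) < S.card), Λ j}

lemma fin_strictMono_le {k m : ℕ} {f : Fin k → Fin m} (hf : StrictMono f) :
    ∀ i : Fin k, (i : ℕ) ≤ (f i : ℕ) := by
  intro i
  obtain ⟨n, hn⟩ : ∃ n, (i : ℕ) = n := ⟨_, rfl⟩
  induction n generalizing i with
  | zero => omega
  | succ n ih =>
    have hnk : n < k := by omega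
    have hlt : (⟨n, hnk⟩ : Fin k) < i := by simp [Fin.lt_def, hn]
    have h1 := hf hlt
    have h2 := ih ⟨n, hnk⟩ rfl
    simp only [Fin.lt_def, Fin.val_mk] at h1 h2
    omega

lemma filter_lt_eq_image {p k : ℕ} (hk : k ≤ p) :
    Finset.univ.filter (fun j : Fin p => (j : ℕ) < k)
      = Finset.univ.image (Fin.castLE hk) := by
  ext j
  simp only [Finset.mem_filter, Finset.mem_univ, true_and, Finset.mem_image]
  constructor
  · intro h; exact ⟨⟨j, h⟩, rfl⟩
  · rintro ⟨i, rfl⟩; simp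

lemma card_filter_lt {p k : ℕ} (hk : k ≤ p) :
    (Finset.univ.filter (fun j : Fin p => (j : ℕ) < k)).card = k := by
  rw [filter_lt_eq_image hk,
    Finset.card_image_of_injective _ (Fin.strictMono_castLE hk).injective]
  simp

lemma sum_le_sum_firstk {p : ℕ} (Λ : Fin p → ℝ) (hΛ : Antitone Λ) (T : Finset (Fin p)) :
    ∑ j ∈ T, Λ j ≤ ∑ j ∈ Finset.univ.filter (fun j : Fin p => (j : ℕ) < T.card), Λ j := by
  have hkp : T.card ≤ p := by simpa using T.card_le_univ
  have hrange : Finset.univ.image (T.orderEmbOfFin rfl) = T := by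
    ext x
    simp only [Finset.mem_image, Finset.mem_univ, true_and]
    constructor
    · rintro ⟨i, rfl⟩; exact T.orderEmbOfFin_mem rfl i
    · intro hx
      have h := T.range_orderEmbOfFin rfl
      have : x ∈ Set.range (T.orderEmbOfFin rfl) := by rw [h]; exact hx
      exact this
  conv_lhs => rw [← hrange]
  rw [filter_lt_eq_image hkp,
    Finset.sum_image (fun a _ b _ h => (T.orderEmbOfFin rfl).injective h),
    Finset.sum_image (fun a _ b _ h => (Fin.strictMono_castLE hkp).injective h)]
  apply Finset.sum_le_sum
  intro i _
  apply hΛ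
  rw [Fin.le_def]
  exact fin_strictMono_le (T.orderEmbOfFin rfl).strictMono i

lemma abel_ineq : ∀ (n : ℕ) (a c l : ℕ → ℝ), (∀ i, 0 ≤ a i) → Antitone a →
    (∀ k ≤ n, ∑ i ∈ Finset.range k, c i ≤ ∑ i ∈ Finset.range k, l i) →
    ∑ i ∈ Finset.range n, c i * a i ≤ ∑ i ∈ Finset.range n, l i * a i := by
  intro n
  induction n with
  | zero => simp
  | succ n ih =>
    intro a c l ha hanti hps
    set a' : ℕ → ℝ := fun i => a (min i n) - a n with ha'
    have key : ∀ f : ℕ → ℝ, ∑ i ∈ Finset.range (n+1), f i * a i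
        = (∑ i ∈ Finset.range n, f i * a' i) + a n * ∑ i ∈ Finset.range (n+1), f i := by
      intro f
      rw [Finset.mul_sum, Finset.sum_range_succ (f := fun i => a n * f i), ← add_assoc,
        ← Finset.sum_add_distrib, Finset.sum_range_succ (f := fun i => f i * a i)]
      congr 1
      · apply Finset.sum_congr rfl
        intro i hi
        have hin : min i n = i := min_eq_left (le_of_lt (Finset.mem_range.mp hi))
        simp only [ha', hin]
        ring
      · ring
    rw [key c, key l]
    have h1 : ∑ i ∈ Finset.range n, c i * a' i ≤ ∑ i ∈ Finset.range n, l i * a' i := by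
      apply ih a' c l
      · intro i
        simp only [ha', sub_nonneg]
        exact hanti (min_le_right i n)
      · intro i j hij
        simp only [ha']
        have := hanti (min_le_min hij (le_refl n))
        linarith
      · intro k hk
        exact hps k (hk.trans (Nat.le_succ n))
    have h2 : a n * ∑ i ∈ Finset.range (n+1), c i ≤ a n * ∑ i ∈ Finset.range (n+1), l i :=
      mul_le_mul_of_nonneg_left (hps (n+1) le_rfl) (ha n)
    linarith

noncomputable def ext0 {p : ℕ} (c : Fin p → ℝ) : ℕ → ℝ :=
  fun i => if h : i < p then c ⟨i, h⟩ else 0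

lemma ext0_apply {p : ℕ} (c : Fin p → ℝ) (j : Fin p) : ext0 c (j : ℕ) = c j := by
  simp [ext0, j.2]

lemma sum_filter_eq_sum_range {p : ℕ} (c : Fin p → ℝ) (k : ℕ) (hk : k ≤ p) :
    ∑ j ∈ Finset.univ.filter (fun j : Fin p => (j : ℕ) < k), c j
      = ∑ i ∈ Finset.range k, ext0 c i := by
  rw [Finset.sum_filter]
  have h1 : (∑ j : Fin p, if (j : ℕ) < k then c j else 0)
      = ∑ j : Fin p, (fun i : ℕ => if i < k then ext0 c i else 0) (j : ℕ) := by
    apply Finset.sum_congr rfl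
    intro j _
    simp only [ext0_apply]
  rw [h1, Fin.sum_univ_eq_sum_range (fun i => if i < k then ext0 c i else 0) p,
    ← Finset.sum_filter]
  apply Finset.sum_congr
  · ext i; simp only [Finset.mem_filter, Finset.mem_range]; omega
  · intros; rfl

lemma abel_fin {p : ℕ} (a c l : Fin p → ℝ) (ha : ∀ i, 0 ≤ a i) (hanti : Antitone a)
    (hps : ∀ k ≤ p, ∑ i ∈ Finset.univ.filter (fun i : Fin p => (i : ℕ) < k), c i
        ≤ ∑ i ∈ Finset.univ.filter (fun i : Fin p => (i : ℕ) < k), l i) :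
    ∑ i, c i * a i ≤ ∑ i, l i * a i := by
  have ha0 : ∀ i, 0 ≤ ext0 a i := by
    intro i; unfold ext0; split <;> [exact ha _; exact le_rfl]
  have hanti0 : Antitone (ext0 a) := by
    intro i j hij
    unfold ext0
    split
    · split
      · exact hanti (by rwa [Fin.le_def])
      · omega
    · split
      · exact ha _
      · exact le_rfl
  have key : ∀ f : Fin p → ℝ, ∑ i, f i * a i
      = ∑ i ∈ Finset.range p, ext0 f i * ext0 a i := by
    intro f
    rw [← Fin.sum_univ_eq_sum_range (fun i => ext0 f i * ext0 a i) p]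
    apply Finset.sum_congr rfl
    intro j _
    simp only [ext0_apply]
  rw [key c, key l]
  apply abel_ineq p (ext0 a) (ext0 c) (ext0 l) ha0 hanti0
  intro k hk
  rw [← sum_filter_eq_sum_range c k hk, ← sum_filter_eq_sum_range l k hk]
  exact hps k hk

/-- For every `b`, `J_Λ(b) = max_{π ∈ C_Λ} π'b`. -/
theorem slopeNorm_eq_max_dualBall {p : ℕ} (Λ : Fin p → ℝ)
    (hΛanti : Antitone Λ) (hΛnonneg : ∀ i, 0 ≤ Λ i) (b : Fin p → ℝ) :
    IsGreatest ((fun π : Fin p → ℝ => ∑ i, π i * b i) '' dualBall Λ) (slopeNorm Λ b) := by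
  classical
  -- the sorting permutation: |b ∘ σ₀| is antitone
  set σ₀ : Equiv.Perm (Fin p) := Tuple.sort (fun i => -|b i|) with hσ₀
  have habs_anti : Antitone (fun i => |b (σ₀ i)|) := by
    have h := Tuple.monotone_sort (fun i => -|b i|)
    intro i j hij
    have := h hij
    simp only [Function.comp_apply] at this
    dsimp only
    linarith
  have habs_nonneg : ∀ i, (0:ℝ) ≤ |b (σ₀ i)| := fun i => abs_nonneg _
  -- the supremum equals the sorted pairing
  have hmono : Monovary Λ (fun i => |b (σ₀ i)|) := by
    intro i j hgij
    rcases le_or_gt j i with h | h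
    · exact hΛanti h
    · exact absurd hgij (not_lt.mpr (habs_anti h.le))
  have hmax : ∀ σ : Equiv.Perm (Fin p),
      ∑ i, Λ i * |b (σ i)| ≤ ∑ i, Λ i * |b (σ₀ i)| := by
    intro σ
    have h := hmono.sum_mul_comp_perm_le_sum_mul (σ := σ.trans σ₀.symm)
    simpa using h
  have hslope : slopeNorm Λ b = ∑ i, Λ i * |b (σ₀ i)| := by
    apply le_antisymm
    · exact ciSup_le hmax
    · exact le_ciSup (Set.Finite.bddAbove
        (Set.finite_range (fun σ : Equiv.Perm (Fin p) => ∑ i, Λ i * |b (σ i)|))) σ₀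
  have hsign : ∀ x : ℝ, Real.sign x * x = |x| := by
    intro x
    rcases lt_trichotomy x 0 with h | h | h
    · rw [Real.sign_of_neg h, abs_of_neg h]; ring
    · simp [h]
    · rw [Real.sign_of_pos h, abs_of_pos h]; ring
  have hsign_abs : ∀ x : ℝ, |Real.sign x| ≤ 1 := by
    intro x
    rcases lt_trichotomy x 0 with h | h | h
    · rw [Real.sign_of_neg h]; simp
    · simp [h]
    · rw [Real.sign_of_pos h]; simp
  constructor
  · -- membership: the maximizer
    refine ⟨fun i => Λ (σ₀.symm i) * Real.sign (b i), ?_, ?_⟩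
    · -- it lies in the dual ball
      intro S
      have step1 : ∑ j ∈ S, |Λ (σ₀.symm j) * Real.sign (b j)| ≤ ∑ j ∈ S, Λ (σ₀.symm j) := by
        apply Finset.sum_le_sum
        intro j _
        rw [abs_mul, abs_of_nonneg (hΛnonneg _)]
        calc Λ (σ₀.symm j) * |Real.sign (b j)| ≤ Λ (σ₀.symm j) * 1 :=
              mul_le_mul_of_nonneg_left (hsign_abs _) (hΛnonneg _)
          _ = Λ (σ₀.symm j) := mul_one _
      have step2 : ∑ j ∈ S, Λ (σ₀.symm j) = ∑ j ∈ S.image σ₀.symm, Λ j := by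
        rw [Finset.sum_image (fun a _ b _ h => σ₀.symm.injective h)]
      have hcard : (S.image σ₀.symm).card = S.card :=
        Finset.card_image_of_injective _ σ₀.symm.injective
      have step3 := sum_le_sum_firstk Λ hΛanti (S.image σ₀.symm)
      rw [hcard] at step3
      calc ∑ j ∈ S, |Λ (σ₀.symm j) * Real.sign (b j)| ≤ ∑ j ∈ S, Λ (σ₀.symm j) := step1
        _ = ∑ j ∈ S.image σ₀.symm, Λ j := step2
        _ ≤ _ := step3
    · -- it attains the value
      rw [hslope]
      have h1 : ∀ i, Λ (σ₀.symm i) * Real.sign (b i) * b i = Λ (σ₀.symm i) * |b i| := by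
        intro i
        rw [mul_assoc, hsign]
      simp only [h1]
      rw [← Equiv.sum_comp σ₀ (fun i => Λ (σ₀.symm i) * |b i|)]
      apply Finset.sum_congr rfl
      intro i _
      simp
  · -- upper bound
    rintro x ⟨π, hπ, rfl⟩
    rw [hslope]
    have step1 : ∑ i, π i * b i ≤ ∑ i, |π i| * |b i| := by
      apply Finset.sum_le_sum
      intro i _
      rw [← abs_mul]
      exact le_abs_self _
    have step2 : ∑ i, |π i| * |b i| = ∑ i, |π (σ₀ i)| * |b (σ₀ i)| :=
      (Equiv.sum_comp σ₀ (fun i => |π i| * |b i|)).symm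
    have step3 : ∑ i, |π (σ₀ i)| * |b (σ₀ i)| ≤ ∑ i, Λ i * |b (σ₀ i)| := by
      apply abel_fin (fun i => |b (σ₀ i)|) (fun i => |π (σ₀ i)|) Λ habs_nonneg habs_anti
      intro k hk
      have himg : ∑ i ∈ Finset.univ.filter (fun i : Fin p => (i : ℕ) < k), |π (σ₀ i)|
          = ∑ j ∈ (Finset.univ.filter (fun i : Fin p => (i : ℕ) < k)).image σ₀, |π j| := by
        rw [Finset.sum_image (fun a _ b _ h => σ₀.injective h)]
      have hcard : ((Finset.univ.filter (fun i : Fin p => (i : ℕ) < k)).image σ₀).card = k := by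
        rw [Finset.card_image_of_injective _ σ₀.injective, card_filter_lt hk]
      have h := hπ ((Finset.univ.filter (fun i : Fin p => (i : ℕ) < k)).image σ₀)
      rw [hcard] at h
      rw [himg]
      exact h
    linarith
end

section
/- Let Y ∈ ℝ^n, X ∈ ℝ^{n×p}, Λ = (λ₁,…,λ_p) with λ₁ ≥ … ≥ λ_p ≥ 0 and λ₁ > 0, let M = {b ∈ ℝ^p : ‖b‖₂² ≤ p‖Y‖₂⁴/(4λ₁²)}, and define r(b,π) = ½‖Y − Xb‖₂² + π′b on M × C_Λ. Then max_{π ∈ C_Λ} min_{b ∈ M} r(b,π) = min_{b ∈ M} max_{π ∈ C_Λ} r(b,π), and this common value equals min_{b ∈ ℝ^p} [½‖Y − Xb‖₂² + J_Λ(b)]. -/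
open Matrix

/-- The SLOPE objective function `b ↦ ½‖Y - Xb‖₂² + J_Λ(b)`. -/
noncomputable def slopeObj {n p : ℕ} (X : Matrix (Fin n) (Fin p) ℝ) (Y : Fin n → ℝ)
    (Λ : Fin p → ℝ) (b : Fin p → ℝ) : ℝ :=
  (1 / 2) * ∑ i, (Y i - (X *ᵥ b) i) ^ 2 + slopeNorm Λ b

/-!
For `π ∈ C_Λ` one has `π ⬝ b ≤ J_Λ(b)` (Abel summation against the decreasingly sorted `|b|`),
so `r b π` is at most the SLOPE objective `F b`. Outside `M` the objective exceeds its value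
`½‖Y‖²` at `0` (through the term `λ₁ max |bᵢ|`), so a minimiser `b₀` of `F` over the compact set
`M` is a global one. The first-order conditions at `b₀` say that `π₀ = Xᵀ(Y - Xb₀)` satisfies
`π₀ ⬝ h ≤ J_Λ(h)` for all `h`, hence `π₀ ∈ C_Λ`, and `π₀ ⬝ b₀ = J_Λ(b₀)`. Then `(b₀, π₀)` is a
saddle point of `r` on `M × C_Λ`, and every value in the statement is `F b₀`.
-/

open Finset Filter Topology

theorem Finset.sum_le_sum_of_card_eq {ι M : Type*} [AddCommMonoid M] [LinearOrder M]
    [IsOrderedAddMonoid M] {s t : Finset ι} {f : ι → M} (hcard : #s = #t)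
    (h : ∀ i ∈ s, ∀ j ∈ t, f i ≤ f j) : ∑ i ∈ s, f i ≤ ∑ j ∈ t, f j := by
  rcases s.eq_empty_or_nonempty with rfl | hs
  · simp [card_eq_zero.mp hcard.symm]
  obtain ⟨i₀, hi₀, hmax⟩ := s.exists_max_image f hs
  calc ∑ i ∈ s, f i ≤ #s • f i₀ := sum_le_card_nsmul _ _ _ hmax
    _ = #t • f i₀ := by rw [hcard]
    _ ≤ ∑ j ∈ t, f j := card_nsmul_le_sum _ _ _ (h i₀ hi₀)

lemma le_of_forall_mul_le_mul_add_sq {a b C : ℝ}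
    (h : ∀ t ∈ Set.Ioo (0 : ℝ) 1, t * a ≤ t * b + t ^ 2 * C) : a ≤ b := by
  have hcont : Continuous fun t : ℝ => b + t * C := by fun_prop
  have hlim : Tendsto (fun t : ℝ => b + t * C) (𝓝[>] 0) (𝓝 b) :=
    (hcont.tendsto' 0 b (by simp)).mono_left nhdsWithin_le_nhds
  refine ge_of_tendsto hlim ?_
  filter_upwards [Ioo_mem_nhdsGT one_pos] with t ht
  exact le_of_mul_le_mul_left (by linarith [h t ht]) ht.1

lemma isCompact_setOf_sum_sq_le {ι : Type*} [Fintype ι] (R : ℝ) :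
    IsCompact {b : ι → ℝ | ∑ i, b i ^ 2 ≤ R} := by
  refine Metric.isCompact_of_isClosed_isBounded (isClosed_le (by fun_prop) continuous_const) ?_
  refine (Metric.isBounded_iff_subset_closedBall 0).2 ⟨√R, fun b hb => ?_⟩
  rw [mem_closedBall_zero_iff, pi_norm_le_iff_of_nonneg (Real.sqrt_nonneg R)]
  exact fun i =>
    Real.abs_le_sqrt ((single_le_sum (fun j _ => sq_nonneg (b j)) (mem_univ i)).trans hb)

lemma minimax_eq_of_isSaddlePoint {α β : Type*} {r : α → β → ℝ} {M : Set α} {C : Set β}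
    {x : α} {y : β} (hx : x ∈ M) (hy : y ∈ C) (hxy : ∀ π ∈ C, r x π ≤ r x y)
    (hyx : ∀ b ∈ M, r x y ≤ r b y) (hbddBelow : ∀ π ∈ C, BddBelow ((fun b => r b π) '' M))
    (hbddAbove : ∀ b ∈ M, BddAbove ((fun π => r b π) '' C)) :
    sSup ((fun π => sInf ((fun b => r b π) '' M)) '' C) = r x y ∧
      sInf ((fun b => sSup ((fun π => r b π) '' C)) '' M) = r x y := by
  constructor
  · refine IsGreatest.csSup_eq ⟨⟨y, hy, ?_⟩, ?_⟩
    · exact IsLeast.csInf_eq ⟨⟨x, hx, rfl⟩, by rintro _ ⟨b, hb, rfl⟩; exact hyx b hb⟩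
    · rintro _ ⟨π, hπ, rfl⟩
      exact (csInf_le (hbddBelow π hπ) ⟨x, hx, rfl⟩).trans (hxy π hπ)
  · refine IsLeast.csInf_eq ⟨⟨x, hx, ?_⟩, ?_⟩
    · exact IsGreatest.csSup_eq ⟨⟨y, hy, rfl⟩, by rintro _ ⟨π, hπ, rfl⟩; exact hxy π hπ⟩
    · rintro _ ⟨b, hb, rfl⟩
      exact (hyx b hb).trans (le_csSup (hbddAbove b hb) ⟨y, hy, rfl⟩)

section LeastSquares

variable {m ι : Type*} [Fintype m] [Fintype ι] (X : Matrix m ι ℝ) (Y : m → ℝ)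

noncomputable def leastSquaresLoss (b : ι → ℝ) : ℝ :=
  (1 / 2) * ∑ i, (Y i - (X *ᵥ b) i) ^ 2

lemma leastSquaresLoss_nonneg (b : ι → ℝ) : 0 ≤ leastSquaresLoss X Y b := by
  unfold leastSquaresLoss; positivity

lemma continuous_leastSquaresLoss : Continuous (leastSquaresLoss X Y) := by
  unfold leastSquaresLoss; fun_prop

lemma leastSquaresLoss_add_smul (b h : ι → ℝ) (t : ℝ) :
    leastSquaresLoss X Y (b + t • h) =
      leastSquaresLoss X Y b - t * ((Y - X *ᵥ b) ᵥ* X ⬝ᵥ h) + t ^ 2 * leastSquaresLoss X 0 h := by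
  rw [← dotProduct_mulVec]
  simp only [leastSquaresLoss, dotProduct, mulVec_add, mulVec_smul, Pi.add_apply, Pi.smul_apply,
    Pi.sub_apply, Pi.zero_apply, smul_eq_mul, mul_sum, ← sum_sub_distrib, ← sum_add_distrib]
  exact sum_congr rfl fun i _ => by ring

lemma leastSquaresLoss_add_dotProduct_le (b₀ b : ι → ℝ) :
    leastSquaresLoss X Y b₀ + (Y - X *ᵥ b₀) ᵥ* X ⬝ᵥ b₀ ≤
      leastSquaresLoss X Y b + (Y - X *ᵥ b₀) ᵥ* X ⬝ᵥ b := by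
  have h := leastSquaresLoss_add_smul X Y b₀ (b - b₀) 1
  rw [one_smul, add_sub_cancel, one_mul, one_pow, one_mul] at h
  rw [h, dotProduct_sub]
  linarith [leastSquaresLoss_nonneg X 0 (b - b₀)]

end LeastSquares

namespace Slope

variable {p : ℕ}

def prefixSum (f : Fin p → ℝ) (k : ℕ) : ℝ :=
  ∑ j ∈ univ.filter (fun j : Fin p => (j : ℕ) < k), f j

lemma sum_le_prefixSum {Λ : Fin p → ℝ} (hΛ : Antitone Λ) (S : Finset (Fin p)) :
    ∑ j ∈ S, Λ j ≤ prefixSum Λ #S := by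
  set T := univ.filter (fun j : Fin p => (j : ℕ) < #S)
  have hT : #T = #S := by
    simpa [T, Fin.card_filter_val_lt] using card_le_univ S
  have hexchange : ∑ j ∈ S \ T, Λ j ≤ ∑ j ∈ T \ S, Λ j :=
    sum_le_sum_of_card_eq (card_sdiff_comm hT.symm) fun i hi j hj => hΛ <| by
      simp only [Finset.mem_sdiff, mem_filter, mem_univ, true_and, not_lt, T] at hi hj
      exact Fin.le_def.mpr (by omega)
  rw [prefixSum, ← sum_inter_add_sum_sdiff S T, ← sum_inter_add_sum_sdiff T S, inter_comm]
  exact add_le_add_right hexchange _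

def extendByZero (f : Fin p → ℝ) (k : ℕ) : ℝ := if h : k < p then f ⟨k, h⟩ else 0

lemma sum_univ_eq_sum_range_extendByZero (f : Fin p → ℝ) :
    ∑ i, f i = ∑ k ∈ range p, extendByZero f k := by
  rw [← Fin.sum_univ_eq_sum_range]
  simp [extendByZero]

lemma prefixSum_eq_sum_range {k : ℕ} (hk : k ≤ p) (f : Fin p → ℝ) :
    prefixSum f k = ∑ i ∈ range k, extendByZero f i := by
  rw [prefixSum, sum_filter, sum_univ_eq_sum_range_extendByZero, ← sum_range_add_sum_Ico _ hk,
    sum_eq_zero (s := Ico k p), add_zero]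
  · refine sum_congr rfl fun i hi => ?_
    rw [mem_range] at hi
    simp [extendByZero, hi, hi.trans_le hk]
  · intro i hi
    rw [mem_Ico] at hi
    simp [extendByZero, hi.1]

lemma sum_mul_le_sum_mul_of_prefixSum_le {a l c : Fin p → ℝ} (hc : Antitone c) (hc₀ : 0 ≤ c)
    (h : ∀ k ≤ p, prefixSum a k ≤ prefixSum l k) : ∑ i, a i * c i ≤ ∑ i, l i * c i := by
  set c' := extendByZero c
  set d := extendByZero (l - a)
  have hc'₀ : ∀ k, 0 ≤ c' k := fun k => by
    simp only [c', extendByZero]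
    split_ifs
    exacts [hc₀ _, le_rfl]
  have hc' : Antitone c' := fun i j hij => by
    by_cases hj : j < p
    · simp only [c', extendByZero, hj, hij.trans_lt hj, dif_pos]
      exact hc (Fin.mk_le_mk.mpr hij)
    · simpa only [c', extendByZero, hj, dif_neg, not_false_eq_true] using hc'₀ i
  have hd : ∀ k ≤ p, 0 ≤ ∑ i ∈ range k, d i := fun k hk => by
    rw [← prefixSum_eq_sum_range hk, prefixSum, sum_congr rfl fun _ _ => Pi.sub_apply l a _,
      sum_sub_distrib]
    exact sub_nonneg.mpr (h k hk)
  have habel : 0 ≤ ∑ i ∈ range p, c' i • d i := by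
    rw [sum_range_by_parts]
    refine sub_nonneg.mpr (le_trans (sum_nonpos fun i hi => ?_) ?_)
    · rw [mem_range] at hi
      exact smul_nonpos_of_nonpos_of_nonneg (sub_nonpos.mpr (hc' i.le_succ)) (hd _ (by omega))
    · exact smul_nonneg (hc'₀ _) (hd p le_rfl)
  have hsum : ∑ i ∈ range p, c' i • d i = ∑ i, l i * c i - ∑ i, a i * c i := by
    rw [← sum_sub_distrib, sum_univ_eq_sum_range_extendByZero]
    refine sum_congr rfl fun k _ => ?_
    simp only [c', d, extendByZero, smul_eq_mul]
    split_ifs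
    · simp only [Pi.sub_apply]; ring
    · simp
  linarith

lemma le_slopeNorm (Λ b : Fin p → ℝ) (σ : Equiv.Perm (Fin p)) :
    ∑ i, Λ i * |b (σ i)| ≤ slopeNorm Λ b :=
  le_ciSup (f := fun σ => ∑ i, Λ i * |b (σ i)|) (Set.finite_range _).bddAbove σ

lemma slopeNorm_le {Λ b : Fin p → ℝ} {x : ℝ}
    (h : ∀ σ : Equiv.Perm (Fin p), ∑ i, Λ i * |b (σ i)| ≤ x) : slopeNorm Λ b ≤ x :=
  ciSup_le h

lemma slopeNorm_smul (Λ b : Fin p → ℝ) (t : ℝ) : slopeNorm Λ (t • b) = |t| * slopeNorm Λ b := by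
  simp only [slopeNorm, Real.mul_iSup_of_nonneg (abs_nonneg t), mul_sum, Pi.smul_apply, smul_eq_mul,
    abs_mul, mul_left_comm]

lemma slopeNorm_zero (Λ : Fin p → ℝ) : slopeNorm Λ 0 = 0 := by
  simpa using slopeNorm_smul Λ 0 0

variable {Λ : Fin p → ℝ}

lemma slopeNorm_add_le (hΛ : 0 ≤ Λ) (x y : Fin p → ℝ) :
    slopeNorm Λ (x + y) ≤ slopeNorm Λ x + slopeNorm Λ y :=
  slopeNorm_le fun σ => calc
    ∑ i, Λ i * |(x + y) (σ i)| ≤ ∑ i, (Λ i * |x (σ i)| + Λ i * |y (σ i)|) :=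
      sum_le_sum fun i _ => by
        rw [← mul_add]; exact mul_le_mul_of_nonneg_left (abs_add_le _ _) (hΛ i)
    _ ≤ slopeNorm Λ x + slopeNorm Λ y := by
      rw [sum_add_distrib]; exact add_le_add (le_slopeNorm Λ x σ) (le_slopeNorm Λ y σ)

lemma mul_abs_le_slopeNorm (hΛ : 0 ≤ Λ) (b : Fin p → ℝ) (i j : Fin p) :
    Λ i * |b j| ≤ slopeNorm Λ b := by
  refine le_trans ?_ (le_slopeNorm Λ b (Equiv.swap i j))
  simpa using single_le_sum (f := fun k => Λ k * |b (Equiv.swap i j k)|)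
    (fun k _ => mul_nonneg (hΛ k) (abs_nonneg _)) (mem_univ i)

lemma continuous_slopeNorm (Λ : Fin p → ℝ) : Continuous (slopeNorm Λ) := by
  have : slopeNorm Λ = fun b => univ.sup' univ_nonempty fun σ : Equiv.Perm (Fin p) =>
      ∑ i, Λ i * |b (σ i)| := funext fun b => (sup'_univ_eq_ciSup _).symm
  rw [this]
  exact Continuous.finset_sup'_apply _ fun σ _ => by fun_prop

lemma dotProduct_le_slopeNorm {π : Fin p → ℝ} (hπ : π ∈ dualBall Λ)
    (b : Fin p → ℝ) : π ⬝ᵥ b ≤ slopeNorm Λ b := by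
  set σ := Tuple.sort fun i => -|b i|
  have hsorted : Antitone fun i => |b (σ i)| := fun i j hij => by
    simpa using Tuple.monotone_sort (fun i => -|b i|) hij
  have hprefix : ∀ k ≤ p, prefixSum (fun i => |π (σ i)|) k ≤ prefixSum Λ k := fun k hk => by
    have hcard : #((univ.filter fun j : Fin p => (j : ℕ) < k).map σ.toEmbedding) = k := by
      simp [Fin.card_filter_val_lt, hk]
    simpa [prefixSum, hcard] using hπ ((univ.filter fun j : Fin p => (j : ℕ) < k).map σ.toEmbedding)
  calc π ⬝ᵥ b = ∑ i, π (σ i) * b (σ i) := (Equiv.sum_comp σ fun i => π i * b i).symm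
    _ ≤ ∑ i, |π (σ i)| * |b (σ i)| := sum_le_sum fun i _ => by
      rw [← abs_mul]; exact le_abs_self _
    _ ≤ ∑ i, Λ i * |b (σ i)| :=
      sum_mul_le_sum_mul_of_prefixSum_le hsorted (fun i => abs_nonneg _) hprefix
    _ ≤ slopeNorm Λ b := le_slopeNorm Λ b σ

lemma mem_dualBall_of_forall_dotProduct_le (hΛ : Antitone Λ) {π : Fin p → ℝ}
    (h : ∀ x, π ⬝ᵥ x ≤ slopeNorm Λ x) : π ∈ dualBall Λ := by
  intro S
  set x : Fin p → ℝ := fun j => if j ∈ S then (if 0 ≤ π j then 1 else -1) else 0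
  have habs : ∀ j, |x j| = if j ∈ S then 1 else 0 := fun j => by
    simp only [x]; split_ifs <;> simp
  have hpair : π ⬝ᵥ x = ∑ j ∈ S, |π j| := by
    rw [dotProduct, ← sum_filter_add_sum_filter_not univ (· ∈ S), filter_mem_eq_inter, univ_inter,
      sum_eq_zero (s := univ.filter (· ∉ S)) fun j hj => by simp_all [x], add_zero]
    refine sum_congr rfl fun j hj => ?_
    simp only [x, hj, if_true]
    split_ifs with hπj
    · rw [abs_of_nonneg hπj, mul_one]
    · rw [abs_of_neg (not_le.mp hπj), mul_neg_one]
  have hnorm : slopeNorm Λ x ≤ prefixSum Λ #S := slopeNorm_le fun σ => by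
    calc ∑ i, Λ i * |x (σ i)| = ∑ j, Λ (σ.symm j) * |x j| :=
          by simpa using Equiv.sum_comp σ fun j => Λ (σ.symm j) * |x j|
      _ = ∑ j ∈ S.map σ.symm.toEmbedding, Λ j := by
          simp [habs, sum_map]
      _ ≤ prefixSum Λ #S := by simpa using sum_le_prefixSum hΛ (S.map σ.symm.toEmbedding)
  exact hpair ▸ (h x).trans hnorm

variable {n : ℕ} {X : Matrix (Fin n) (Fin p) ℝ} {Y : Fin n → ℝ}

lemma slopeObj_apply (b : Fin p → ℝ) :
    slopeObj X Y Λ b = leastSquaresLoss X Y b + slopeNorm Λ b :=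
  rfl

lemma continuous_slopeObj : Continuous (slopeObj X Y Λ) :=
  (continuous_leastSquaresLoss X Y).add (continuous_slopeNorm Λ)

lemma residual_vecMul_dotProduct_le_slopeNorm {b₀ : Fin p → ℝ}
    (hb₀ : ∀ b, slopeObj X Y Λ b₀ ≤ slopeObj X Y Λ b) (hΛ : 0 ≤ Λ) (x : Fin p → ℝ) :
    (Y - X *ᵥ b₀) ᵥ* X ⬝ᵥ x ≤ slopeNorm Λ x := by
  refine le_of_forall_mul_le_mul_add_sq (C := leastSquaresLoss X 0 x) fun t ht => ?_
  have hmin := hb₀ (b₀ + t • x)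
  have htri := slopeNorm_add_le hΛ b₀ (t • x)
  rw [slopeNorm_smul, abs_of_pos ht.1] at htri
  rw [slopeObj_apply, slopeObj_apply, leastSquaresLoss_add_smul] at hmin
  linarith

lemma slopeNorm_le_residual_vecMul_dotProduct {b₀ : Fin p → ℝ}
    (hb₀ : ∀ b, slopeObj X Y Λ b₀ ≤ slopeObj X Y Λ b) :
    slopeNorm Λ b₀ ≤ (Y - X *ᵥ b₀) ᵥ* X ⬝ᵥ b₀ := by
  refine le_of_forall_mul_le_mul_add_sq (C := leastSquaresLoss X 0 (-b₀)) fun t ht => ?_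
  have hmin := hb₀ (b₀ + t • -b₀)
  have hshrink : b₀ + t • -b₀ = (1 - t) • b₀ := by module
  rw [slopeObj_apply, slopeObj_apply, leastSquaresLoss_add_smul, hshrink, slopeNorm_smul,
    abs_of_pos (sub_pos.2 ht.2), dotProduct_neg] at hmin
  linarith

variable (X Y)

lemma slopeObj_zero_lt (hp : 0 < p) (hΛ : 0 ≤ Λ) (hΛ₀ : 0 < Λ ⟨0, hp⟩) {b : Fin p → ℝ}
    (hb : (p : ℝ) * (∑ i, Y i ^ 2) ^ 2 / (4 * Λ ⟨0, hp⟩ ^ 2) < ∑ i, b i ^ 2) :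
    slopeObj X Y Λ 0 < slopeObj X Y Λ b := by
  obtain ⟨j, -, hj⟩ := exists_max_image univ (fun j => b j ^ 2) ⟨⟨0, hp⟩, mem_univ _⟩
  have hsum : ∑ i, b i ^ 2 ≤ p * b j ^ 2 := by
    simpa using sum_le_card_nsmul univ _ _ hj
  have hsq : (∑ i, Y i ^ 2) ^ 2 < (2 * (Λ ⟨0, hp⟩ * |b j|)) ^ 2 := by
    rw [div_lt_iff₀ (by positivity)] at hb
    have : (p : ℝ) * (∑ i, Y i ^ 2) ^ 2 < p * (2 * (Λ ⟨0, hp⟩ * |b j|)) ^ 2 :=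
      calc (p : ℝ) * (∑ i, Y i ^ 2) ^ 2 < (∑ i, b i ^ 2) * (4 * Λ ⟨0, hp⟩ ^ 2) := hb
        _ ≤ p * b j ^ 2 * (4 * Λ ⟨0, hp⟩ ^ 2) := by gcongr
        _ = p * (2 * (Λ ⟨0, hp⟩ * |b j|)) ^ 2 := by rw [mul_pow, mul_pow, sq_abs]; ring
    exact lt_of_mul_lt_mul_left this (Nat.cast_nonneg p)
  have hY := lt_of_pow_lt_pow_left₀ 2 (by positivity) hsq
  calc slopeObj X Y Λ 0 = (1 / 2) * ∑ i, Y i ^ 2 := by simp [slopeObj, slopeNorm_zero]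
    _ < Λ ⟨0, hp⟩ * |b j| := by linarith
    _ ≤ slopeNorm Λ b := mul_abs_le_slopeNorm hΛ b _ j
    _ ≤ slopeObj X Y Λ b := le_add_of_nonneg_left (leastSquaresLoss_nonneg X Y b)

lemma exists_mem_forall_slopeObj_le (hp : 0 < p) (hΛ : 0 ≤ Λ) (hΛ₀ : 0 < Λ ⟨0, hp⟩) :
    ∃ b₀ ∈ {b : Fin p → ℝ | ∑ i, b i ^ 2 ≤ (p : ℝ) * (∑ i, Y i ^ 2) ^ 2 / (4 * Λ ⟨0, hp⟩ ^ 2)},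
      ∀ b, slopeObj X Y Λ b₀ ≤ slopeObj X Y Λ b := by
  have hfar : ∀ b ∉ {b : Fin p → ℝ | ∑ i, b i ^ 2 ≤ (p : ℝ) * (∑ i, Y i ^ 2) ^ 2 /
      (4 * Λ ⟨0, hp⟩ ^ 2)}, slopeObj X Y Λ 0 < slopeObj X Y Λ b :=
    fun b hb => slopeObj_zero_lt X Y hp hΛ hΛ₀ (not_le.mp hb)
  obtain ⟨b₀, hb₀⟩ := continuous_slopeObj.exists_forall_le' 0 <|
    mem_of_superset (isCompact_setOf_sum_sq_le _).compl_mem_cocompact fun b hb => (hfar b hb).le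
  exact ⟨b₀, by_contra fun h => (hfar b₀ h).not_ge (hb₀ 0), hb₀⟩

end Slope

open Slope in
/-- Minimax equality: `max_{π ∈ C_Λ} min_{b ∈ M} r(b,π) = min_{b ∈ M} max_{π ∈ C_Λ} r(b,π)`,
and the common value equals `min_{b ∈ ℝᵖ} [½‖Y - Xb‖₂² + J_Λ(b)]`. -/
theorem slope_minimax {n p : ℕ} (hp : 0 < p)
    (X : Matrix (Fin n) (Fin p) ℝ) (Y : Fin n → ℝ)
    (Λ : Fin p → ℝ) (hΛanti : Antitone Λ) (hΛnonneg : ∀ i, 0 ≤ Λ i)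
    (hlam1 : 0 < Λ ⟨0, hp⟩)
    (M : Set (Fin p → ℝ))
    (hM : M = {b | ∑ i, (b i) ^ 2 ≤ (p : ℝ) * (∑ i, (Y i) ^ 2) ^ 2 / (4 * (Λ ⟨0, hp⟩) ^ 2)})
    (r : (Fin p → ℝ) → (Fin p → ℝ) → ℝ)
    (hr : r = fun b π => (1 / 2) * ∑ i, (Y i - (X *ᵥ b) i) ^ 2 + ∑ i, π i * b i) :
    sSup ((fun π => sInf ((fun b => r b π) '' M)) '' dualBall Λ)
        = sInf ((fun b => sSup ((fun π => r b π) '' dualBall Λ)) '' M) ∧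
    sInf ((fun b => sSup ((fun π => r b π) '' dualBall Λ)) '' M)
        = sInf (Set.range (slopeObj X Y Λ)) := by
  obtain ⟨b₀, hb₀M, hb₀⟩ := exists_mem_forall_slopeObj_le X Y hp hΛnonneg hlam1
  set π₀ := (Y - X *ᵥ b₀) ᵥ* X
  have hπ₀ : π₀ ∈ dualBall Λ :=
    mem_dualBall_of_forall_dotProduct_le hΛanti <|
      residual_vecMul_dotProduct_le_slopeNorm hb₀ hΛnonneg
  have hpair : π₀ ⬝ᵥ b₀ = slopeNorm Λ b₀ :=
    le_antisymm (dotProduct_le_slopeNorm hπ₀ b₀) (slopeNorm_le_residual_vecMul_dotProduct hb₀)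
  subst hM hr
  obtain ⟨hmaxmin, hminmax⟩ := minimax_eq_of_isSaddlePoint
    (r := fun b π => leastSquaresLoss X Y b + π ⬝ᵥ b) hb₀M hπ₀
    (fun π hπ => add_le_add_right ((dotProduct_le_slopeNorm hπ b₀).trans hpair.ge) _)
    (fun b _ => leastSquaresLoss_add_dotProduct_le X Y b₀ b)
    (fun π _ => (isCompact_setOf_sum_sq_le _).bddBelow_image
      ((continuous_leastSquaresLoss X Y).add (by fun_prop)).continuousOn)
    (fun b _ => ⟨slopeObj X Y Λ b, by
      rintro _ ⟨π, hπ, rfl⟩; exact add_le_add_right (dotProduct_le_slopeNorm hπ b) _⟩)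
  have hmin : leastSquaresLoss X Y b₀ + π₀ ⬝ᵥ b₀ = sInf (Set.range (slopeObj X Y Λ)) := by
    rw [hpair]
    have hleast : IsLeast (Set.range (slopeObj X Y Λ)) (slopeObj X Y Λ b₀) :=
      ⟨⟨b₀, rfl⟩, Set.forall_mem_range.2 hb₀⟩
    exact hleast.csInf_eq.symm
  exact ⟨hmaxmin.trans hminmax.symm, hminmax.trans hmin⟩
end

section
/- Let Y ∈ ℝ^n, X ∈ ℝ^{n×p} with X′X invertible, Λ = (λ₁,…,λ_p) with λ₁ ≥ … ≥ λ_p ≥ 0. Let π* = (π₁*,…,π_p*)′ be any minimizer over C_Λ of π ↦ (X′Y − π)′(X′X)^{-1}(X′Y − π) and set β* = (β₁*,…,β_p*)′ = (X′X)^{-1}(X′Y − π*). Then sign(β_i*)·sign(π_i*) ≥ 0 for every i = 1,…,p. -/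
open Matrix

/-- If `π*` minimizes `π ↦ (X'Y - π)'(X'X)⁻¹(X'Y - π)` over `C_Λ` and
`β* = (X'X)⁻¹(X'Y - π*)`, then `sign(βᵢ*)·sign(πᵢ*) ≥ 0` for every `i`
(with `sign 0 = 0`). -/
theorem dual_minimizer_sign_agreement {n p : ℕ}
    (X : Matrix (Fin n) (Fin p) ℝ) (Y : Fin n → ℝ) (hX : IsUnit (Xᵀ * X).det)
    (Λ : Fin p → ℝ) (hΛanti : Antitone Λ) (hΛnonneg : ∀ i, 0 ≤ Λ i)
    (πstar : Fin p → ℝ) (hmem : πstar ∈ dualBall Λ)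
    (hmin : ∀ π ∈ dualBall Λ,
      (Xᵀ *ᵥ Y - πstar) ⬝ᵥ ((Xᵀ * X)⁻¹ *ᵥ (Xᵀ *ᵥ Y - πstar)) ≤
        (Xᵀ *ᵥ Y - π) ⬝ᵥ ((Xᵀ * X)⁻¹ *ᵥ (Xᵀ *ᵥ Y - π)))
    (βstar : Fin p → ℝ) (hβ : βstar = (Xᵀ * X)⁻¹ *ᵥ (Xᵀ *ᵥ Y - πstar)) :
    ∀ i, 0 ≤ Real.sign (βstar i) * Real.sign (πstar i) := by
  intro i
  by_cases hπ : πstar i = 0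
  · simp [hπ]
  -- notation
  set A := (Xᵀ * X)⁻¹ with hA_def
  set w := Xᵀ *ᵥ Y - πstar with hw_def
  set s := Real.sign (πstar i) with hs_def
  have hs : s = -1 ∨ s = 1 := Real.sign_apply_eq_of_ne_zero _ hπ
  have hss : s * s = 1 := by rcases hs with h | h <;> rw [h] <;> norm_num
  have habs_s : |s| = 1 := by rcases hs with h | h <;> rw [h] <;> norm_num
  have hsπ : s * πstar i = |πstar i| := by
    rcases lt_or_gt_of_ne hπ with h | h
    · rw [hs_def, Real.sign_of_neg h, abs_of_neg h]; ring
    · rw [hs_def, Real.sign_of_pos h, abs_of_pos h]; ring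
  have hπeq : πstar i = s * |πstar i| := by
    rw [← hsπ, ← mul_assoc, hss, one_mul]
  -- key claim : 0 ≤ s * βstar i
  have key : 0 ≤ s * βstar i := by
    by_contra hb'
    push_neg at hb'
    set b := s * βstar i with hb_def
    set c := A i i with hc_def
    have hcpos : (0:ℝ) < |c| + 1 := by positivity
    set t := min |πstar i| ((-b) / (|c| + 1)) with ht_def
    have ht0 : 0 < t := by
      exact lt_min (abs_pos.mpr hπ) (div_pos (by linarith) hcpos)
    have htπ : t ≤ |πstar i| := min_le_left _ _
    have htc : t * (|c| + 1) ≤ -b := by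
      have := min_le_right |πstar i| ((-b) / (|c| + 1))
      calc t * (|c| + 1) ≤ ((-b) / (|c| + 1)) * (|c| + 1) := by
            exact mul_le_mul_of_nonneg_right this hcpos.le
        _ = -b := by field_simp
    -- the perturbed point
    set π' := Function.update πstar i (πstar i - t * s) with hπ'_def
    have hmem' : π' ∈ dualBall Λ := by
      intro S
      have h1 : ∑ j ∈ S, |π' j| ≤ ∑ j ∈ S, |πstar j| := by
        apply Finset.sum_le_sum
        intro j hj
        by_cases hji : j = i
        · subst hji
          rw [hπ'_def, Function.update_self]
          have : πstar j - t * s = s * (|πstar j| - t) := by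
            rw [mul_sub, ← hπeq]; ring
          rw [this, abs_mul, habs_s, one_mul, abs_of_nonneg (by linarith)]
          linarith [abs_nonneg (πstar j), ht0]
        · rw [hπ'_def, Function.update_of_ne hji]
      exact h1.trans (hmem S)
    have h := hmin π' hmem'
    -- rewrite the perturbed residual
    have hdiff : Xᵀ *ᵥ Y - π' = w + (t * s) • (Pi.single i 1 : Fin p → ℝ) := by
      funext j
      by_cases hji : j = i
      · subst hji
        simp [hπ'_def, hw_def, Function.update_self, Pi.single_apply]
        ring
      · simp [hπ'_def, hw_def, Function.update_of_ne hji, Pi.single_apply, hji]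
    rw [hdiff] at h
    -- symmetry of A
    have hAsymm : Aᵀ = A := by
      rw [hA_def, transpose_nonsing_inv, transpose_mul, transpose_transpose]
    have hβw : A *ᵥ w = βstar := by rw [hβ]
    -- expand the quadratic form
    have hexp : (w + (t * s) • (Pi.single i 1 : Fin p → ℝ)) ⬝ᵥ A *ᵥ (w + (t * s) • (Pi.single i 1 : Fin p → ℝ))
        = w ⬝ᵥ A *ᵥ w + 2 * (t * s) * βstar i + (t * s) * ((t * s) * c) := by
      have hcross : w ⬝ᵥ A *ᵥ ((t * s) • (Pi.single i 1 : Fin p → ℝ))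
          = ((t * s) • (Pi.single i 1 : Fin p → ℝ)) ⬝ᵥ A *ᵥ w := by
        rw [dotProduct_mulVec, ← mulVec_transpose, hAsymm, dotProduct_comm]
      have hu_w : ((t * s) • (Pi.single i 1 : Fin p → ℝ) : Fin p → ℝ) ⬝ᵥ A *ᵥ w = (t * s) * βstar i := by
        rw [smul_dotProduct, single_dotProduct, hβw]
        simp
      have hAu : (A *ᵥ (Pi.single i 1 : Fin p → ℝ)) i = c := by
        rw [mulVec_single]
        simp [hc_def]
      have hu_u : ((t * s) • (Pi.single i 1 : Fin p → ℝ) : Fin p → ℝ) ⬝ᵥ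
          A *ᵥ ((t * s) • (Pi.single i 1 : Fin p → ℝ)) = (t * s) * ((t * s) * c) := by
        rw [mulVec_smul, dotProduct_smul, smul_dotProduct, single_dotProduct, hAu]
        simp
      rw [add_dotProduct, mulVec_add, dotProduct_add, dotProduct_add, hcross, hu_w, hu_u]
      ring
    rw [hexp] at h
    have h2 : 0 ≤ 2 * (t * s) * βstar i + (t * s) * ((t * s) * c) := by linarith
    have h3 : 0 ≤ 2 * t * b + t ^ 2 * c := by
      have : 2 * (t * s) * βstar i + (t * s) * ((t * s) * c)
          = 2 * t * (s * βstar i) + t ^ 2 * (s * s) * c := by ring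
      rw [this, hss] at h2
      simpa [hb_def] using h2
    have hcabs : c ≤ |c| := le_abs_self c
    nlinarith [mul_pos ht0 ht0, mul_le_mul_of_nonneg_left hcabs ht0.le]
  -- conclude from the key claim
  rcases hs with h1 | h1
  · rw [h1] at key ⊢
    have hβle : βstar i ≤ 0 := by linarith
    rcases hβle.lt_or_eq with h2 | h2
    · rw [Real.sign_of_neg h2]; norm_num
    · rw [h2, Real.sign_zero]; norm_num
  · rw [h1] at key ⊢
    have hβge : 0 ≤ βstar i := by linarith
    rcases hβge.lt_or_eq with h2 | h2
    · rw [Real.sign_of_pos h2]; norm_num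
    · rw [← h2, Real.sign_zero]; norm_num
end

section
/- Let Y ∈ ℝ^n, X ∈ ℝ^{n×p} with X′X invertible, Λ = (λ₁,…,λ_p) with λ₁ ≥ … ≥ λ_p ≥ 0. Let π* be any minimizer over C_Λ of π ↦ (X′Y − π)′(X′X)^{-1}(X′Y − π) and set β* = (X′X)^{-1}(X′Y − π*). Then (|π₁*|,…,|π_p*|) and (|β₁*|,…,|β_p*|) are similarly sorted: for all indices i, j, if |β_i*| > |β_j*| then |π_i*| ≥ |π_j*|. -/
open Matrix

private lemma symm_dot {p : ℕ} (A : Matrix (Fin p) (Fin p) ℝ) (hA : Aᵀ = A)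
    (x y : Fin p → ℝ) : x ⬝ᵥ A *ᵥ y = y ⬝ᵥ A *ᵥ x := by
  rw [Matrix.dotProduct_mulVec, ← hA, Matrix.vecMul_transpose, dotProduct_comm, hA]

/-- If `π*` minimizes `π ↦ (X'Y - π)'(X'X)⁻¹(X'Y - π)` over `C_Λ` and
`β* = (X'X)⁻¹(X'Y - π*)`, then `(|π₁*|,…,|π_p*|)` and `(|β₁*|,…,|β_p*|)` are
similarly sorted: `|βᵢ*| > |βⱼ*|` implies `|πᵢ*| ≥ |πⱼ*|`. -/
theorem dual_minimizer_similarly_sorted {n p : ℕ}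
    (X : Matrix (Fin n) (Fin p) ℝ) (Y : Fin n → ℝ) (hX : IsUnit (Xᵀ * X).det)
    (Λ : Fin p → ℝ) (hΛanti : Antitone Λ) (hΛnonneg : ∀ i, 0 ≤ Λ i)
    (πstar : Fin p → ℝ) (hmem : πstar ∈ dualBall Λ)
    (hmin : ∀ π ∈ dualBall Λ,
      (Xᵀ *ᵥ Y - πstar) ⬝ᵥ ((Xᵀ * X)⁻¹ *ᵥ (Xᵀ *ᵥ Y - πstar)) ≤
        (Xᵀ *ᵥ Y - π) ⬝ᵥ ((Xᵀ * X)⁻¹ *ᵥ (Xᵀ *ᵥ Y - π)))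
    (βstar : Fin p → ℝ) (hβ : βstar = (Xᵀ * X)⁻¹ *ᵥ (Xᵀ *ᵥ Y - πstar)) :
    ∀ i j, |βstar j| < |βstar i| → |πstar j| ≤ |πstar i| := by
  intro i j hij
  by_contra hlt
  push_neg at hlt
  have hne : i ≠ j := by
    rintro rfl; exact lt_irrefl _ hij
  set A := (Xᵀ * X)⁻¹ with hAdef
  have hAsymm : Aᵀ = A := by
    rw [hAdef, Matrix.transpose_nonsing_inv, Matrix.transpose_mul,
      Matrix.transpose_transpose]
  -- the swapped vector
  set π' : Fin p → ℝ := fun k =>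
    if k = i then (if 0 ≤ βstar i then |πstar j| else -|πstar j|)
    else if k = j then (if 0 ≤ βstar j then |πstar i| else -|πstar i|)
    else πstar k with hπ'def
  have habs : ∀ k, |π' k| = |πstar (Equiv.swap i j k)| := by
    intro k
    by_cases hk : k = i
    · by_cases hb : 0 ≤ βstar i <;>
        simp [hπ'def, hk, hb, Equiv.swap_apply_left, abs_abs]
    · by_cases hk' : k = j
      · by_cases hb : 0 ≤ βstar j <;>
          simp [hπ'def, hk, hk', hb, hne.symm, Equiv.swap_apply_right, abs_abs]
      · simp only [hπ'def, if_neg hk, if_neg hk',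
          Equiv.swap_apply_of_ne_of_ne hk hk']
  have hmem' : π' ∈ dualBall Λ := by
    intro S
    have h1 : ∑ k ∈ S, |π' k| = ∑ k ∈ S.map (Equiv.swap i j).toEmbedding, |πstar k| := by
      rw [Finset.sum_map]
      exact Finset.sum_congr rfl fun k _ => habs k
    have h2 := hmem (S.map (Equiv.swap i j).toEmbedding)
    rwa [Finset.card_map, ← h1] at h2
  -- the direction and positivity of the directional derivative
  set d : Fin p → ℝ := π' - πstar with hddef
  have hc : 0 < βstar ⬝ᵥ d := by
    have hsum : βstar ⬝ᵥ d = ∑ k ∈ ({i, j} : Finset (Fin p)), βstar k * d k := by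
      rw [dotProduct]
      refine (Finset.sum_subset (Finset.subset_univ _) ?_).symm
      intro k _ hk
      simp only [Finset.mem_insert, Finset.mem_singleton, not_or] at hk
      have : d k = 0 := by
        simp [hddef, hπ'def, if_neg hk.1, if_neg hk.2]
      rw [this, mul_zero]
    rw [hsum, Finset.sum_pair hne]
    have hdi : βstar i * d i = |βstar i| * |πstar j| - βstar i * πstar i := by
      by_cases hb : 0 ≤ βstar i
      · simp only [hddef, hπ'def, Pi.sub_apply, if_pos rfl, if_true, if_pos hb,
          abs_of_nonneg hb]
        ring
      · simp only [hddef, hπ'def, Pi.sub_apply, if_pos rfl, if_true, if_neg hb,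
          abs_of_neg (not_le.mp hb)]
        ring
    have hdj : βstar j * d j = |βstar j| * |πstar i| - βstar j * πstar j := by
      by_cases hb : 0 ≤ βstar j
      · simp only [hddef, hπ'def, Pi.sub_apply, if_neg (Ne.symm hne), if_pos rfl, if_true,
          if_pos hb, abs_of_nonneg hb]
        ring
      · simp only [hddef, hπ'def, Pi.sub_apply, if_neg (Ne.symm hne), if_pos rfl, if_true,
          if_neg hb, abs_of_neg (not_le.mp hb)]
        ring
    rw [hdi, hdj]
    have h1 : βstar i * πstar i ≤ |βstar i| * |πstar i| := by
      rw [← abs_mul]; exact le_abs_self _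
    have h2 : βstar j * πstar j ≤ |βstar j| * |πstar j| := by
      rw [← abs_mul]; exact le_abs_self _
    nlinarith [mul_pos (sub_pos.mpr hij) (sub_pos.mpr hlt)]
  set c : ℝ := βstar ⬝ᵥ d with hcdef
  set q : ℝ := d ⬝ᵥ A *ᵥ d with hqdef
  -- choose the step size
  set t : ℝ := if q ≤ 0 then (1 : ℝ) else min 1 (c / q) with htdef
  have ht0 : 0 < t := by
    rw [htdef]
    rcases le_or_gt q 0 with hq | hq
    · rw [if_pos hq]; norm_num
    · rw [if_neg (not_le.mpr hq)]
      exact lt_min one_pos (div_pos hc hq)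
  have ht1 : t ≤ 1 := by
    rw [htdef]
    rcases le_or_gt q 0 with hq | hq
    · rw [if_pos hq]
    · rw [if_neg (not_le.mpr hq)]
      exact min_le_left _ _
  have hkey : t ^ 2 * q - 2 * t * c < 0 := by
    rw [htdef]
    rcases le_or_gt q 0 with hq | hq
    · rw [if_pos hq]
      nlinarith
    · rw [if_neg (not_le.mpr hq)]
      set s := min 1 (c / q) with hsdef
      have hs0 : 0 < s := lt_min one_pos (div_pos hc hq)
      have hsq : s * q ≤ c := by
        have : s ≤ c / q := min_le_right _ _
        exact (le_div_iff₀ hq).mp this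
      nlinarith
  -- the perturbed point and its membership
  set πt : Fin p → ℝ := πstar + t • d with hπtdef
  have hmemt : πt ∈ dualBall Λ := by
    intro S
    have hbnd : ∀ k, |πt k| ≤ (1 - t) * |πstar k| + t * |π' k| := by
      intro k
      have hptk : πt k = (1 - t) * πstar k + t * π' k := by
        simp only [hπtdef, hddef, Pi.add_apply, Pi.smul_apply, Pi.sub_apply,
          smul_eq_mul]
        ring
      rw [hptk]
      refine (abs_add_le _ _).trans ?_
      rw [abs_mul, abs_mul, abs_of_nonneg (by linarith : (0:ℝ) ≤ 1 - t),
        abs_of_nonneg ht0.le]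
    calc ∑ k ∈ S, |πt k| ≤ ∑ k ∈ S, ((1 - t) * |πstar k| + t * |π' k|) :=
          Finset.sum_le_sum fun k _ => hbnd k
      _ = (1 - t) * ∑ k ∈ S, |πstar k| + t * ∑ k ∈ S, |π' k| := by
          rw [Finset.sum_add_distrib, Finset.mul_sum, Finset.mul_sum]
      _ ≤ (1 - t) * (∑ k ∈ Finset.univ.filter (fun k : Fin p => (k : ℕ) < S.card), Λ k)
            + t * (∑ k ∈ Finset.univ.filter (fun k : Fin p => (k : ℕ) < S.card), Λ k) := by
          exact add_le_add
            (mul_le_mul_of_nonneg_left (hmem S) (by linarith))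
            (mul_le_mul_of_nonneg_left (hmem' S) ht0.le)
      _ = _ := by ring
  -- the quadratic expansion
  set v : Fin p → ℝ := Xᵀ *ᵥ Y with hvdef
  set u : Fin p → ℝ := v - πstar with hudef
  have hvt : v - πt = u - t • d := by
    simp only [hπtdef, hudef]
    abel
  have hβu : βstar = A *ᵥ u := hβ
  have hsym : u ⬝ᵥ A *ᵥ d = d ⬝ᵥ A *ᵥ u := symm_dot A hAsymm u d
  have hdAu : d ⬝ᵥ A *ᵥ u = c := by
    rw [← hβu, hcdef, dotProduct_comm]
  have hexp : (v - πt) ⬝ᵥ A *ᵥ (v - πt) = u ⬝ᵥ A *ᵥ u - 2 * t * c + t ^ 2 * q := by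
    rw [hvt]
    simp only [Matrix.mulVec_sub, Matrix.mulVec_smul, sub_dotProduct,
      dotProduct_sub, smul_dotProduct, dotProduct_smul,
      smul_eq_mul]
    rw [hsym, hdAu, ← hqdef]
    ring
  have hle := hmin πt hmemt
  rw [hexp] at hle
  have : u ⬝ᵥ A *ᵥ u ≤ u ⬝ᵥ A *ᵥ u - 2 * t * c + t ^ 2 * q := hle
  linarith
end

section
/- Let Y ∈ ℝ^n, X ∈ ℝ^{n×p} with X′X invertible, Λ = (λ₁,…,λ_p) with λ₁ ≥ … ≥ λ_p ≥ 0. Let π* be any minimizer over C_Λ of π ↦ (X′Y − π)′(X′X)^{-1}(X′Y − π), set β* = (X′X)^{-1}(X′Y − π*), and let τ be a permutation of {1,…,p} with |β*_{τ(1)}| ≥ … ≥ |β*_{τ(p)}|. If there is k ∈ {2,…,p} with Σ_{i=1}^{k-1} |π*_{τ(i)}| < Σ_{i=1}^{k-1} λ_i and |π*_{τ(k)}| > 0, then |β*_{τ(k-1)}| = |β*_{τ(k)}|. -/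
/-!
Since `C_Λ` is convex, first-order optimality of `π*` for the quadratic objective says that
`β* = (X'X)⁻¹(X'Y - π*)` satisfies `β* ⬝ π ≤ β* ⬝ π*` on `C_Λ`. Testing this against the
point `sign(β*) · (Λ ∘ τ⁻¹)` of `C_Λ` gives `∑ⱼ |β*_{τ j}| (λⱼ - |π*_{τ j}|) ≤ 0`. By Abel
summation the left side is a sum of the gaps `|β*_{τ m}| - |β*_{τ (m+1)}| ≥ 0` weighted by the
partial sums `∑_{j ≤ m} (λⱼ - |π*_{τ j}|)`, which are nonnegative because `π* ∈ C_Λ`. A strict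
gap at a position with strictly positive partial sum would make the whole sum positive.
-/

open Matrix

open Finset

theorem Fin.val_le_orderEmbedding_apply {k p : ℕ} (e : Fin k ↪o Fin p) (i : Fin k) :
    (i : ℕ) ≤ e i := by
  have hsub : (Iio i).map e.toEmbedding ⊆ Iio (e i) := by
    intro x hx
    obtain ⟨j, hj, rfl⟩ := mem_map.mp hx
    simpa using hj
  simpa using card_le_card hsub

theorem Antitone.sum_le_sum_filter_val_lt_card {p : ℕ} {Λ : Fin p → ℝ} (hΛ : Antitone Λ)
    (T : Finset (Fin p)) :
    ∑ j ∈ T, Λ j ≤ ∑ j ∈ univ.filter (fun j : Fin p => (j : ℕ) < #T), Λ j := by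
  have hk : #T ≤ p := by simpa using T.card_le_univ
  have hfilter : univ.filter (fun j : Fin p => (j : ℕ) < #T) = univ.map (Fin.castLEEmb hk) := by
    ext j
    simp only [mem_filter, mem_univ, true_and, mem_map, Fin.castLEEmb_apply]
    exact ⟨fun hj => ⟨⟨j, hj⟩, rfl⟩, by rintro ⟨i, rfl⟩; exact i.isLt⟩
  rw [hfilter, sum_map]
  conv_lhs => rw [← map_orderEmbOfFin_univ T rfl, sum_map]
  exact sum_le_sum fun i _ => hΛ (Fin.val_le_orderEmbedding_apply _ i)

theorem le_zero_of_forall_mul_le_sq_mul {b q : ℝ}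
    (h : ∀ t : ℝ, 0 < t → t ≤ 1 → t * b ≤ t ^ 2 * q) : b ≤ 0 := by
  have hlim : Filter.Tendsto (fun t : ℝ => t * q) (nhdsWithin 0 (Set.Ioi 0)) (nhds 0) :=
    ((continuous_mul_const q).tendsto' 0 0 (zero_mul q)).mono_left nhdsWithin_le_nhds
  refine ge_of_tendsto hlim ?_
  filter_upwards [Ioo_mem_nhdsGT (zero_lt_one' ℝ)] with t ht
  have := h t ht.1 ht.2.le
  nlinarith [ht.1]

namespace Matrix

variable {ι : Type*} [Fintype ι] {A : Matrix ι ι ℝ}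

theorem IsSymm.dotProduct_mulVec_sub_smul (hA : A.IsSymm) (w d : ι → ℝ) (t : ℝ) :
    (w - t • d) ⬝ᵥ (A *ᵥ (w - t • d)) =
      w ⬝ᵥ (A *ᵥ w) - 2 * t * (A *ᵥ w ⬝ᵥ d) + t ^ 2 * (d ⬝ᵥ (A *ᵥ d)) := by
  have hcross : w ⬝ᵥ (A *ᵥ d) = A *ᵥ w ⬝ᵥ d := by
    rw [dotProduct_mulVec, ← mulVec_transpose, hA.eq]
  simp only [mulVec_sub, mulVec_smul, sub_dotProduct, dotProduct_sub, smul_dotProduct,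
    dotProduct_smul, hcross, dotProduct_comm d (A *ᵥ w), smul_eq_mul]
  ring

theorem IsSymm.isMaxOn_mulVec_dotProduct_of_isMinOn (hA : A.IsSymm) {C : Set (ι → ℝ)}
    (hC : Convex ℝ C) {c π₀ : ι → ℝ} (hπ₀ : π₀ ∈ C)
    (hmin : IsMinOn (fun π => (c - π) ⬝ᵥ (A *ᵥ (c - π))) C π₀) :
    IsMaxOn (fun π => A *ᵥ (c - π₀) ⬝ᵥ π) C π₀ := by
  intro π hπ
  have hslope : A *ᵥ (c - π₀) ⬝ᵥ (π - π₀) ≤ 0 := by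
    refine le_zero_of_forall_mul_le_sq_mul (q := (π - π₀) ⬝ᵥ (A *ᵥ (π - π₀)) / 2)
      fun t ht0 ht1 => ?_
    have hmem := hC.add_smul_sub_mem hπ₀ hπ ⟨ht0.le, ht1⟩
    have hle : (c - π₀) ⬝ᵥ (A *ᵥ (c - π₀)) ≤
        (c - (π₀ + t • (π - π₀))) ⬝ᵥ (A *ᵥ (c - (π₀ + t • (π - π₀)))) := hmin hmem
    rw [← sub_sub, hA.dotProduct_mulVec_sub_smul] at hle
    linarith
  simpa [dotProduct_sub, sub_nonpos] using hslope

end Matrix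

section dualBall

variable {p : ℕ} {Λ : Fin p → ℝ}

theorem convex_dualBall (Λ : Fin p → ℝ) : Convex ℝ (dualBall Λ) := by
  intro x hx y hy a b ha hb hab S
  calc ∑ j ∈ S, |(a • x + b • y) j| ≤ ∑ j ∈ S, (a * |x j| + b * |y j|) := by
        refine sum_le_sum fun j _ => ?_
        simpa [abs_mul, abs_of_nonneg ha, abs_of_nonneg hb] using abs_add_le (a * x j) (b * y j)
    _ = a * ∑ j ∈ S, |x j| + b * ∑ j ∈ S, |y j| := by rw [sum_add_distrib, mul_sum, mul_sum]
    _ ≤ a * ∑ j ∈ univ.filter (fun j : Fin p => (j : ℕ) < #S), Λ j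
          + b * ∑ j ∈ univ.filter (fun j : Fin p => (j : ℕ) < #S), Λ j := by
        gcongr
        exacts [hx S, hy S]
    _ = _ := by rw [← add_mul, hab, one_mul]

theorem mem_dualBall_of_abs_le_comp_perm (hΛ : Antitone Λ) {π : Fin p → ℝ}
    (σ : Equiv.Perm (Fin p)) (hπ : ∀ k, |π k| ≤ Λ (σ k)) : π ∈ dualBall Λ := by
  intro S
  calc ∑ k ∈ S, |π k| ≤ ∑ k ∈ S, Λ (σ k) := sum_le_sum fun k _ => hπ k
    _ = ∑ j ∈ S.map σ.toEmbedding, Λ j := (sum_map S σ.toEmbedding Λ).symm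
    _ ≤ _ := by simpa using hΛ.sum_le_sum_filter_val_lt_card (S.map σ.toEmbedding)

theorem sum_Iic_abs_comp_le_of_mem_dualBall {π : Fin p → ℝ} (hπ : π ∈ dualBall Λ)
    (σ : Equiv.Perm (Fin p)) (m : Fin p) :
    ∑ j ∈ Iic m, |π (σ j)| ≤ ∑ j ∈ Iic m, Λ j := by
  simpa [Nat.lt_succ_iff, ← Fin.le_def, filter_ge_eq_Iic] using hπ ((Iic m).map σ.toEmbedding)

theorem abs_sign_le_one (x : ℝ) : |(SignType.sign x : ℝ)| ≤ 1 := by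
  rcases lt_trichotomy x 0 with h | h | h <;> simp [h]

theorem sum_abs_mul_sub_abs_nonpos_of_isMaxOn (hΛ : Antitone Λ) (hΛ0 : ∀ j, 0 ≤ Λ j)
    {β π : Fin p → ℝ} (hmax : IsMaxOn (β ⬝ᵥ ·) (dualBall Λ) π) (τ : Equiv.Perm (Fin p)) :
    ∑ j, |β (τ j)| * (Λ j - |π (τ j)|) ≤ 0 := by
  set π₀ : Fin p → ℝ := fun k => SignType.sign (β k) * Λ (τ.symm k)
  have hπ₀ : π₀ ∈ dualBall Λ := by
    refine mem_dualBall_of_abs_le_comp_perm hΛ τ.symm fun k => ?_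
    rw [abs_mul, abs_of_nonneg (hΛ0 _)]
    exact mul_le_of_le_one_left (hΛ0 _) (abs_sign_le_one _)
  have hπ₀_val : β ⬝ᵥ π₀ = ∑ j, |β (τ j)| * Λ j := by
    rw [dotProduct, ← Equiv.sum_comp τ]
    simp [π₀, ← mul_assoc]
  have hπ_le : β ⬝ᵥ π ≤ ∑ j, |β (τ j)| * |π (τ j)| := by
    rw [dotProduct, ← Equiv.sum_comp τ]
    exact sum_le_sum fun j _ => (le_abs_self _).trans (abs_mul _ _).le
  have hπ_max : β ⬝ᵥ π₀ ≤ β ⬝ᵥ π := hmax hπ₀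
  simp only [mul_sub, sum_sub_distrib]
  linarith

end dualBall

theorem sum_range_mul_pos_of_antitone {V G : ℕ → ℝ} {n i : ℕ} (hV : Antitone V)
    (hV0 : ∀ m, 0 ≤ V m) (hG : ∀ m < n, 0 ≤ ∑ k ∈ Iic m, G k) (hi : i + 1 < n)
    (hVi : V (i + 1) < V i) (hGi : 0 < ∑ k ∈ Iic i, G k) :
    0 < ∑ m ∈ range n, V m * G m := by
  simp only [← Nat.range_succ_eq_Iic] at hG hGi
  have hlast : 0 ≤ V (n - 1) * ∑ k ∈ range n, G k := by
    refine mul_nonneg (hV0 _) ?_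
    simpa [Nat.sub_add_cancel (by omega : 1 ≤ n)] using hG (n - 1) (by omega)
  have hdrops : ∑ m ∈ range (n - 1), (V (m + 1) - V m) * ∑ k ∈ range (m + 1), G k < 0 := by
    refine (sum_lt_sum (g := fun _ => 0) (fun m hm => ?_) ⟨i, ?_, ?_⟩).trans_eq sum_const_zero
    · exact mul_nonpos_of_nonpos_of_nonneg (sub_nonpos.2 (hV m.le_succ))
        (hG m ((mem_range.1 hm).trans_le (n.sub_le 1)))
    · exact mem_range.2 (by omega)
    · exact mul_neg_of_neg_of_pos (sub_neg.2 hVi) hGi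
  have habel := sum_range_by_parts V G n
  simp only [smul_eq_mul] at habel
  linarith

theorem Fin.sum_mul_pos_of_antitone {p : ℕ} {V G : Fin p → ℝ} (hV : Antitone V)
    (hV0 : ∀ j, 0 ≤ V j) (hG : ∀ m, 0 ≤ ∑ j ∈ Iic m, G j) {i : Fin p} (hi : (i : ℕ) + 1 < p)
    (hVi : V ⟨i + 1, hi⟩ < V i) (hGi : 0 < ∑ j ∈ Iic i, G j) :
    0 < ∑ j, V j * G j := by
  let padZero : (Fin p → ℝ) → ℕ → ℝ := fun f m => if h : m < p then f ⟨m, h⟩ else 0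
  have padZero_val (f : Fin p → ℝ) (j : Fin p) : padZero f j = f j := dif_pos j.isLt
  have sum_Iic (m : Fin p) : ∑ j ∈ Iic m, G j = ∑ k ∈ Iic (m : ℕ), padZero G k := by
    rw [← Fin.map_valEmbedding_Iic, sum_map]
    exact sum_congr rfl fun j _ => (padZero_val G j).symm
  have hpad_anti : Antitone (padZero V) := by
    intro a b hab
    by_cases hb : b < p
    · simp only [padZero, dif_pos hb, dif_pos (hab.trans_lt hb)]
      exact hV (Fin.mk_le_mk.2 hab)
    · simp only [padZero, dif_neg hb]
      split_ifs
      exacts [hV0 _, le_rfl]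
  have := sum_range_mul_pos_of_antitone (V := padZero V) (G := padZero G) (i := i) hpad_anti
    (fun m => by unfold padZero; split_ifs; exacts [hV0 _, le_rfl])
    (fun m hm => by simpa [← sum_Iic ⟨m, hm⟩] using hG ⟨m, hm⟩) hi
    (by simpa [padZero, hi] using hVi) (by rwa [← sum_Iic])
  have hsum : ∑ j : Fin p, padZero V j * padZero G j = ∑ j, V j * G j :=
    sum_congr rfl fun j _ => by rw [padZero_val, padZero_val]
  rwa [← Fin.sum_univ_eq_sum_range (fun m => padZero V m * padZero G m), hsum] at this

-- Position `i` (0-based) plays the role of `k - 1` in the informal statement, `i + 1` that of `k`.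
theorem dual_minimizer_cluster_general {n p : ℕ}
    (X : Matrix (Fin n) (Fin p) ℝ) (Y : Fin n → ℝ)
    (Λ : Fin p → ℝ) (hΛanti : Antitone Λ) (hΛnonneg : ∀ i, 0 ≤ Λ i)
    (πstar : Fin p → ℝ) (hmem : πstar ∈ dualBall Λ)
    (hmin : ∀ π ∈ dualBall Λ,
      (Xᵀ *ᵥ Y - πstar) ⬝ᵥ ((Xᵀ * X)⁻¹ *ᵥ (Xᵀ *ᵥ Y - πstar)) ≤
        (Xᵀ *ᵥ Y - π) ⬝ᵥ ((Xᵀ * X)⁻¹ *ᵥ (Xᵀ *ᵥ Y - π)))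
    (βstar : Fin p → ℝ) (hβ : βstar = (Xᵀ * X)⁻¹ *ᵥ (Xᵀ *ᵥ Y - πstar))
    (τ : Equiv.Perm (Fin p))
    (hτ : ∀ i j : Fin p, i ≤ j → |βstar (τ j)| ≤ |βstar (τ i)|) :
    ∀ i : Fin p, ∀ h : (i : ℕ) + 1 < p,
      (∑ j ∈ Finset.univ.filter (fun j : Fin p => j ≤ i), |πstar (τ j)|)
          < (∑ j ∈ Finset.univ.filter (fun j : Fin p => j ≤ i), Λ j) →
      0 < |πstar (τ ⟨(i : ℕ) + 1, h⟩)| →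
      |βstar (τ i)| = |βstar (τ ⟨(i : ℕ) + 1, h⟩)| := by
  intro i h hslack _
  have hsymm : (Xᵀ * X).IsSymm := by rw [IsSymm, transpose_mul, transpose_transpose]
  have hmax := hsymm.inv.isMaxOn_mulVec_dotProduct_of_isMinOn (convex_dualBall Λ) hmem
    (isMinOn_iff.2 hmin)
  rw [← hβ] at hmax
  have hopt := sum_abs_mul_sub_abs_nonpos_of_isMaxOn hΛanti hΛnonneg hmax τ
  by_contra hne
  have hdrop : |βstar (τ ⟨i + 1, h⟩)| < |βstar (τ i)| :=
    (hτ i _ (Fin.mk_le_mk.2 (Nat.le_succ i))).lt_of_ne' hne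
  have hprefix (m : Fin p) : 0 ≤ ∑ j ∈ Iic m, (Λ j - |πstar (τ j)|) := by
    simpa [sum_sub_distrib] using sum_Iic_abs_comp_le_of_mem_dualBall hmem τ m
  have hslack' : 0 < ∑ j ∈ Iic i, (Λ j - |πstar (τ j)|) := by
    simpa [sum_sub_distrib, filter_ge_eq_Iic] using hslack
  have := Fin.sum_mul_pos_of_antitone (V := fun j => |βstar (τ j)|)
    hτ (fun _ => abs_nonneg _) hprefix h hdrop hslack'
  linarith

/-- If `π*` minimizes `π ↦ (X'Y - π)'(X'X)⁻¹(X'Y - π)` over `C_Λ`,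
`β* = (X'X)⁻¹(X'Y - π*)` and `τ` sorts `|β*|` decreasingly, then whenever the sum of
`|π*∘τ|` over the first `k-1` positions is strictly below the corresponding sum of `Λ`
and `|π*_{τ(k)}| > 0`, necessarily `|β*_{τ(k-1)}| = |β*_{τ(k)}|`.
(Here, in 0-based indexing, position `i` plays the role of `k-1` and `i+1` that of `k`;
the first `k-1` positions are `{j : j ≤ i}`.) -/
theorem dual_minimizer_cluster {n p : ℕ}
    (X : Matrix (Fin n) (Fin p) ℝ) (Y : Fin n → ℝ) (hX : IsUnit (Xᵀ * X).det)
    (Λ : Fin p → ℝ) (hΛanti : Antitone Λ) (hΛnonneg : ∀ i, 0 ≤ Λ i)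
    (πstar : Fin p → ℝ) (hmem : πstar ∈ dualBall Λ)
    (hmin : ∀ π ∈ dualBall Λ,
      (Xᵀ *ᵥ Y - πstar) ⬝ᵥ ((Xᵀ * X)⁻¹ *ᵥ (Xᵀ *ᵥ Y - πstar)) ≤
        (Xᵀ *ᵥ Y - π) ⬝ᵥ ((Xᵀ * X)⁻¹ *ᵥ (Xᵀ *ᵥ Y - π)))
    (βstar : Fin p → ℝ) (hβ : βstar = (Xᵀ * X)⁻¹ *ᵥ (Xᵀ *ᵥ Y - πstar))
    (τ : Equiv.Perm (Fin p))
    (hτ : ∀ i j : Fin p, i ≤ j → |βstar (τ j)| ≤ |βstar (τ i)|) :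
    ∀ i : Fin p, ∀ h : (i : ℕ) + 1 < p,
      (∑ j ∈ Finset.univ.filter (fun j : Fin p => j ≤ i), |πstar (τ j)|)
          < (∑ j ∈ Finset.univ.filter (fun j : Fin p => j ≤ i), Λ j) →
      0 < |πstar (τ ⟨(i : ℕ) + 1, h⟩)| →
      |βstar (τ i)| = |βstar (τ ⟨(i : ℕ) + 1, h⟩)| :=
  dual_minimizer_cluster_general X Y Λ hΛanti hΛnonneg πstar hmem hmin βstar hβ τ hτ
end

section
/- Let (Q_n)_{n∈ℕ} be a sequence of real Gaussian random variables defined on the same probability space which converges in distribution to N(0,σ²) for some σ ∈ (0,∞). Then for any δ > 0, Q_n/(log n)^{1/2+δ} → 0 almost surely as n → ∞. -/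
/-!
Centering, `Q n - μ n` is sub-Gaussian with variance proxy `v n`, which is eventually at most
`σ ^ 2 + 1`. The Chernoff bound then gives
`P(|Q n - μ n| ≥ (log n) ^ q) ≤ 2 exp (-(log n) ^ (2 q) / (2 (σ ^ 2 + 1)))`, which is summable as
soon as `2 q > 1`. Choosing `1 / 2 < q < 1 / 2 + δ`, Borel–Cantelli shows that almost surely
`|Q n - μ n| < (log n) ^ q` eventually, so `(Q n - μ n) / (log n) ^ (1 / 2 + δ) → 0`; the means
are bounded and contribute `μ n / (log n) ^ (1 / 2 + δ) → 0`.
-/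

open MeasureTheory ProbabilityTheory Filter Topology
open scoped NNReal

namespace Real

lemma tendsto_log_natCast_atTop : Tendsto (fun n : ℕ ↦ log n) atTop atTop :=
  tendsto_log_atTop.comp tendsto_natCast_atTop_atTop

lemma summable_exp_neg_log_rpow_div {δ c : ℝ} (hδ : 0 < δ) (hc : 0 < c) :
    Summable fun n : ℕ ↦ exp (-log n ^ (1 + δ) / c) := by
  refine (summable_nat_rpow.2 (by norm_num : (-2 : ℝ) < -1)).of_norm_bounded_eventually_nat ?_
  have hlarge : ∀ᶠ n : ℕ in atTop, 2 * c ≤ log n ^ δ :=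
    ((tendsto_rpow_atTop hδ).comp tendsto_log_natCast_atTop).eventually_ge_atTop _
  filter_upwards [hlarge, tendsto_log_natCast_atTop.eventually_gt_atTop 0] with n hn hlog
  have hn0 : (0 : ℝ) < n := by
    by_contra! h
    simp [le_antisymm h n.cast_nonneg] at hlog
  rw [norm_of_nonneg (exp_nonneg _), rpow_def_of_pos hn0, exp_le_exp, rpow_add hlog, rpow_one,
    neg_div, neg_le, mul_neg, neg_neg, le_div_iff₀ hc]
  nlinarith

lemma tendsto_div_log_rpow_of_eventually_abs_le {x : ℕ → ℝ} {p q : ℝ} (hqp : q < p)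
    (hx : ∀ᶠ n in atTop, |x n| ≤ log n ^ q) : Tendsto (fun n ↦ x n / log n ^ p) atTop (𝓝 0) := by
  have hdecay : Tendsto (fun n : ℕ ↦ log n ^ (q - p)) atTop (𝓝 0) := by
    have := (tendsto_rpow_neg_atTop (sub_pos.2 hqp)).comp tendsto_log_natCast_atTop
    rwa [neg_sub] at this
  refine squeeze_zero_norm' ?_ hdecay
  filter_upwards [hx, tendsto_log_natCast_atTop.eventually_gt_atTop 0] with n hxn hlog
  rw [norm_div, norm_eq_abs, norm_of_nonneg (rpow_nonneg hlog.le _), rpow_sub hlog]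
  gcongr

end Real

namespace MeasureTheory

theorem ae_eventually_notMem_of_summable_measureReal {α : Type*} {mα : MeasurableSpace α}
    {μ : Measure α} [IsFiniteMeasure μ] {s : ℕ → Set α} (hs : Summable fun n ↦ μ.real (s n)) :
    ∀ᵐ x ∂μ, ∀ᶠ n in atTop, x ∉ s n := by
  refine ae_eventually_notMem ?_
  have hreal : ∀ n, μ (s n) = ENNReal.ofReal (μ.real (s n)) := fun n ↦ (ofReal_measureReal).symm
  simp_rw [hreal]
  rw [← ENNReal.ofReal_tsum_of_nonneg (fun n ↦ measureReal_nonneg) hs]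
  exact ENNReal.ofReal_ne_top

end MeasureTheory

namespace ProbabilityTheory

open Real

variable {Ω : Type*} {mΩ : MeasurableSpace Ω} {P : Measure Ω}

lemma HasSubgaussianMGF.mono {X : Ω → ℝ} {c c' : ℝ≥0} (h : HasSubgaussianMGF X c P)
    (hc : c ≤ c') : HasSubgaussianMGF X c' P where
  integrable_exp_mul := h.integrable_exp_mul
  mgf_le t := (h.mgf_le t).trans <| exp_le_exp.2 <| by gcongr

lemma HasSubgaussianMGF.measureReal_abs_ge_le {X : Ω → ℝ} {c : ℝ≥0}
    (h : HasSubgaussianMGF X c P) {ε : ℝ} (hε : 0 ≤ ε) :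
    P.real {ω | ε ≤ |X ω|} ≤ 2 * exp (-ε ^ 2 / (2 * c)) := by
  have hsplit : {ω | ε ≤ |X ω|} = {ω | ε ≤ X ω} ∪ {ω | ε ≤ (-X) ω} := by
    ext ω
    simp only [Set.mem_ofPred_eq, Set.mem_union, le_abs, Pi.neg_apply]
  calc P.real {ω | ε ≤ |X ω|} ≤ P.real {ω | ε ≤ X ω} + P.real {ω | ε ≤ (-X) ω} := by
        rw [hsplit]; exact measureReal_union_le _ _
    _ ≤ exp (-ε ^ 2 / (2 * c)) + exp (-ε ^ 2 / (2 * c)) :=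
        add_le_add (h.measure_ge_le hε) (h.neg.measure_ge_le hε)
    _ = 2 * exp (-ε ^ 2 / (2 * c)) := by ring

lemma hasSubgaussianMGF_id_gaussianReal (v : ℝ≥0) :
    HasSubgaussianMGF id v (gaussianReal 0 v) where
  integrable_exp_mul := integrable_exp_mul_gaussianReal
  mgf_le t := by simp [mgf_id_gaussianReal]

lemma HasLaw.hasSubgaussianMGF_sub_of_gaussianReal {X : Ω → ℝ} {m : ℝ} {v : ℝ≥0}
    (hX : HasLaw X (gaussianReal m v) P) : HasSubgaussianMGF (fun ω ↦ X ω - m) v P := by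
  have hcentered := gaussianReal_sub_const hX m
  rw [sub_self] at hcentered
  rw [← HasSubgaussianMGF.id_map_iff hcentered.aemeasurable, hcentered.map_eq]
  exact hasSubgaussianMGF_id_gaussianReal v

theorem ae_tendsto_div_log_rpow_of_hasSubgaussianMGF [IsFiniteMeasure P] {Y : ℕ → Ω → ℝ}
    {c : ℕ → ℝ≥0} {C : ℝ≥0} (hY : ∀ n, HasSubgaussianMGF (Y n) (c n) P)
    (hc : ∀ᶠ n in atTop, c n ≤ C) {p : ℝ} (hp : 1 / 2 < p) :
    ∀ᵐ ω ∂P, Tendsto (fun n ↦ Y n ω / log n ^ p) atTop (𝓝 0) := by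
  set q := (1 / 2 + p) / 2
  set C' : ℝ≥0 := max C 1
  have hsq : ∀ n : ℕ, 0 ≤ log n → (log n ^ q) ^ 2 = log n ^ (1 + (p - 1 / 2)) := fun n hn ↦ by
    rw [← rpow_natCast, ← rpow_mul hn]; congr 1; push_cast; ring
  have htail : Summable fun n : ℕ ↦ P.real {ω | log n ^ q ≤ |Y n ω|} := by
    refine ((summable_exp_neg_log_rpow_div (δ := p - 1 / 2) (by linarith)
      (by positivity : (0 : ℝ) < 2 * C')).mul_left 2).of_norm_bounded_eventually_nat ?_
    filter_upwards [hc, tendsto_log_natCast_atTop.eventually_ge_atTop 0] with n hcn hlog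
    rw [norm_of_nonneg measureReal_nonneg, ← hsq n hlog]
    exact ((hY n).mono (hcn.trans (le_max_left _ _))).measureReal_abs_ge_le (rpow_nonneg hlog _)
  filter_upwards [ae_eventually_notMem_of_summable_measureReal htail] with ω hω
  refine tendsto_div_log_rpow_of_eventually_abs_le (show q < p by simp only [q]; linarith) ?_
  filter_upwards [hω] with n hn
  exact (not_le.1 hn).le

end ProbabilityTheory

theorem gaussian_log_as_convergence_general {Ω : Type*} [MeasurableSpace Ω]
    (P : Measure Ω) [IsProbabilityMeasure P]
    (Q : ℕ → Ω → ℝ) (μ : ℕ → ℝ) (v : ℕ → NNReal)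
    (hQ : ∀ n, Measure.map (Q n) P = gaussianReal (μ n) (v n))
    (σ : ℝ)
    (hμ : Tendsto μ atTop (𝓝 0))
    (hv : Tendsto (fun n => (v n : ℝ)) atTop (𝓝 (σ ^ 2))) :
    ∀ δ : ℝ, 0 < δ →
      ∀ᵐ ω ∂P, Tendsto (fun n : ℕ => Q n ω / (Real.log n) ^ ((1 : ℝ) / 2 + δ))
        atTop (𝓝 0) := by
  intro δ hδ
  have hlaw : ∀ n, HasLaw (Q n) (gaussianReal (μ n) (v n)) P := fun n ↦
    ⟨.of_map_ne_zero (hQ n ▸ IsProbabilityMeasure.ne_zero _), hQ n⟩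
  have hv_bdd : ∀ᶠ n in atTop, v n ≤ (σ ^ 2 + 1).toNNReal :=
    (hv.eventually (eventually_lt_nhds (lt_add_one _))).mono fun n hn ↦
      NNReal.le_toNNReal_of_coe_le hn.le
  have hcentered := ae_tendsto_div_log_rpow_of_hasSubgaussianMGF
    (fun n ↦ (hlaw n).hasSubgaussianMGF_sub_of_gaussianReal) hv_bdd
    (by linarith : (1 : ℝ) / 2 < 1 / 2 + δ)
  have hmean : Tendsto (fun n : ℕ ↦ μ n / Real.log n ^ ((1 : ℝ) / 2 + δ)) atTop (𝓝 0) :=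
    hμ.div_atTop ((tendsto_rpow_atTop (by positivity)).comp Real.tendsto_log_natCast_atTop)
  filter_upwards [hcentered] with ω hω
  simpa [sub_div] using hω.add hmean

/-- If `(Q_n)` is a sequence of Gaussian random variables on a common probability
space converging in distribution to `N(0, σ²)` with `σ ∈ (0, ∞)` (for Gaussian
variables `Q_n ~ N(μ_n, v_n)` this is equivalent to the means `μ_n → 0` and the
variances `v_n → σ²`), then for every `δ > 0`, `Q_n / (log n)^{1/2+δ} → 0`
almost surely. -/
theorem gaussian_log_as_convergence {Ω : Type*} [MeasurableSpace Ω]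
    (P : Measure Ω) [IsProbabilityMeasure P]
    (Q : ℕ → Ω → ℝ) (μ : ℕ → ℝ) (v : ℕ → NNReal)
    (hQ : ∀ n, Measure.map (Q n) P = gaussianReal (μ n) (v n))
    (σ : ℝ) (hσ : 0 < σ)
    (hμ : Tendsto μ atTop (𝓝 0))
    (hv : Tendsto (fun n => (v n : ℝ)) atTop (𝓝 (σ ^ 2))) :
    ∀ δ : ℝ, 0 < δ →
      ∀ᵐ ω ∂P, Tendsto (fun n : ℕ => Q n ω / (Real.log n) ^ ((1 : ℝ) / 2 + δ))
        atTop (𝓝 0) :=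
  gaussian_log_as_convergence_general P Q μ v hQ σ hμ hv
end

section
/- For each n ≥ 1 consider the linear model Y^(n) = X^(n)β + ε^(n) with X^(n) ∈ ℝ^{n×p} deterministic of rank p, ε^(n) ~ N(0, σ²I_n), and assume n^{-1}(X^(n))′X^(n) → C for a positive definite matrix C. Let β̂^SLOPE_n be the SLOPE estimator with tuning vector Λ^(n). If λ₁^(n)/n → λ₀ > 0, then the sequence β̂^SLOPE_n is not strongly consistent: for any nonzero β with λ₀‖β‖_∞ > β′Cβ/2, it is not the case that β̂^SLOPE_n → β almost surely. -/
open Matrix MeasureTheory ProbabilityTheory Filter Topology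

/-!
Comparing the SLOPE objective at `β̂ₙ` with its value at `0` gives
`λ₁⁽ⁿ⁾ |β̂ₙ j| ≤ J(β̂ₙ) ≤ β'(XₙᵀXₙ)β / 2 + (Xₙᵀεₙ)'β̂ₙ`. After division by `n + 1`, the
coordinates of the noise term `Xₙᵀεₙ / (n + 1)` have variance `σ² (XₙᵀXₙ)ⱼⱼ / (n + 1)² → 0`,
so it tends to `0` in probability, hence almost surely along a subsequence. If `β̂ₙ → β`
almost surely, passing to the limit along that subsequence gives `λ₀ |βⱼ| ≤ β'Cβ / 2` for
every `j`, which fails at a coordinate where `|βⱼ| = ‖β‖_∞`.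
-/

open scoped NNReal

theorem slopeNorm_zero {p : ℕ} (Λ : Fin p → ℝ) : slopeNorm Λ 0 = 0 := by
  simp [slopeNorm]

theorem mul_abs_le_slopeNorm {p : ℕ} (hp : 0 < p) {Λ : Fin p → ℝ} (hΛ : ∀ i, 0 ≤ Λ i)
    (b : Fin p → ℝ) (j : Fin p) : Λ ⟨0, hp⟩ * |b j| ≤ slopeNorm Λ b := by
  set τ := Equiv.swap ⟨0, hp⟩ j
  calc Λ ⟨0, hp⟩ * |b j| = Λ ⟨0, hp⟩ * |b (τ ⟨0, hp⟩)| := by rw [Equiv.swap_apply_left]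
    _ ≤ ∑ i, Λ i * |b (τ i)| :=
      Finset.single_le_sum (f := fun i ↦ Λ i * |b (τ i)|)
        (fun i _ ↦ mul_nonneg (hΛ i) (abs_nonneg _)) (Finset.mem_univ _)
    _ ≤ slopeNorm Λ b :=
      le_ciSup (f := fun σ : Equiv.Perm (Fin p) ↦ ∑ i, Λ i * |b (σ i)|)
        (Set.finite_range _).bddAbove τ

theorem slopeNorm_le_of_slopeObj_le_zero {n p : ℕ} (A : Matrix (Fin n) (Fin p) ℝ)
    (e : Fin n → ℝ) (Λ β b : Fin p → ℝ)
    (h : slopeObj A (A *ᵥ β + e) Λ b ≤ slopeObj A (A *ᵥ β + e) Λ 0) :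
    slopeNorm Λ b ≤ β ⬝ᵥ ((Aᵀ * A) *ᵥ β) / 2 + (Aᵀ *ᵥ e) ⬝ᵥ b := by
  set u := A *ᵥ β
  set w := A *ᵥ b
  rw [slopeObj, slopeObj, slopeNorm_zero, mulVec_zero] at h
  simp only [Pi.zero_apply, sub_zero, add_zero] at h
  have hexpand : ∑ i, ((u + e) i - w i) ^ 2
      = ∑ i, (u + e) i ^ 2 - 2 * (w ⬝ᵥ e) - u ⬝ᵥ u + ∑ i, (u i - w i) ^ 2 := by
    simp only [dotProduct, Finset.mul_sum, ← Finset.sum_sub_distrib, ← Finset.sum_add_distrib]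
    exact Finset.sum_congr rfl fun i _ ↦ by simp only [Pi.add_apply]; ring
  have hgram : u ⬝ᵥ u = β ⬝ᵥ ((Aᵀ * A) *ᵥ β) := by
    rw [dotProduct_mulVec, ← mulVec_transpose, mulVec_mulVec, dotProduct_comm]
  have hcross : w ⬝ᵥ e = (Aᵀ *ᵥ e) ⬝ᵥ b := by
    rw [dotProduct_comm, dotProduct_mulVec, ← mulVec_transpose]
  have hsq : 0 ≤ ∑ i, (u i - w i) ^ 2 := Finset.sum_nonneg fun i _ ↦ sq_nonneg _
  rw [hexpand] at h
  linarith

theorem div_mul_abs_le_of_slopeObj_le {n p : ℕ} (hp : 0 < p) (A : Matrix (Fin n) (Fin p) ℝ)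
    (e : Fin n → ℝ) {Λ : Fin p → ℝ} (hΛ : ∀ i, 0 ≤ Λ i) (β b : Fin p → ℝ)
    (hb : ∀ b', slopeObj A (A *ᵥ β + e) Λ b ≤ slopeObj A (A *ᵥ β + e) Λ b')
    {d : ℝ} (hd : 0 < d) (j : Fin p) :
    Λ ⟨0, hp⟩ / d * |b j|
      ≤ β ⬝ᵥ (((1 / d) • (Aᵀ * A)) *ᵥ β) / 2 + ((1 / d) • (Aᵀ *ᵥ e)) ⬝ᵥ b := by
  have h := (mul_abs_le_slopeNorm hp hΛ b j).trans
    (slopeNorm_le_of_slopeObj_le_zero A e Λ β b (hb 0))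
  calc Λ ⟨0, hp⟩ / d * |b j| = 1 / d * (Λ ⟨0, hp⟩ * |b j|) := by ring
    _ ≤ 1 / d * (β ⬝ᵥ ((Aᵀ * A) *ᵥ β) / 2 + (Aᵀ *ᵥ e) ⬝ᵥ b) := by gcongr
    _ = _ := by simp only [smul_mulVec, dotProduct_smul, smul_dotProduct, smul_eq_mul]; ring

theorem measure_pi_gaussianReal_le_abs_sum_le {ι : Type*} [Fintype ι] (v : ℝ≥0) (a : ι → ℝ)
    {δ : ℝ} (hδ : 0 < δ) :
    Measure.pi (fun _ : ι ↦ gaussianReal 0 v) {x | δ ≤ |∑ i, a i * x i|}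
      ≤ ENNReal.ofReal ((∑ i, a i ^ 2) * v / δ ^ 2) := by
  set Q := Measure.pi fun _ : ι ↦ gaussianReal 0 v
  have hmemLp : ∀ i, MemLp (fun t ↦ a i * t) 2 (gaussianReal 0 v) := fun i ↦
    (memLp_id_gaussianReal 2).const_mul (a i)
  have hS : (fun x : ι → ℝ ↦ ∑ i, a i * x i) = ∑ i, fun x ↦ a i * x i := by
    ext x; simp
  have hmemS : MemLp (fun x : ι → ℝ ↦ ∑ i, a i * x i) 2 Q := by
    rw [hS]
    exact memLp_finsetSum' _ fun i _ ↦
      (hmemLp i).comp_measurePreserving (measurePreserving_eval _ i)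
  have hmean : ∫ x, ∑ i, a i * x i ∂Q = 0 := by
    have hint : ∀ i, Integrable (fun x : ι → ℝ ↦ a i * x i) Q := fun i ↦
      ((hmemLp i).comp_measurePreserving (measurePreserving_eval _ i)).integrable one_le_two
    rw [integral_finsetSum _ fun i _ ↦ hint i]
    simp [Q, integral_const_mul, integral_eval, integral_id_gaussianReal]
  have hvar : Var[fun x ↦ ∑ i, a i * x i; Q] = (∑ i, a i ^ 2) * v := by
    rw [hS, variance_sum_pi hmemLp, Finset.sum_mul]
    exact Finset.sum_congr rfl fun i _ ↦ by
      rw [variance_const_mul, variance_fun_id_gaussianReal]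
  simpa [hmean, hvar] using meas_ge_le_variance_div_sq hmemS hδ

section GaussianNoise

variable {Ω : Type*} [MeasurableSpace Ω] {P : Measure Ω} {κ : Type*} {v : ℝ≥0}

theorem measure_le_abs_smul_transpose_mulVec_le {ι : Type*} [Fintype ι] {ε : Ω → ι → ℝ}
    (hε : P.map ε = Measure.pi fun _ ↦ gaussianReal 0 v) (A : Matrix ι κ ℝ) (c : ℝ) (j : κ)
    {δ : ℝ} (hδ : 0 < δ) :
    P {ω | δ ≤ |(c • (Aᵀ *ᵥ ε ω)) j|} ≤ ENNReal.ofReal (c * (c • (Aᵀ * A)) j j * v / δ ^ 2) := by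
  have hεm : AEMeasurable ε P := aemeasurable_of_map_neZero (by rw [hε]; infer_instance)
  have hset : {ω | δ ≤ |(c • (Aᵀ *ᵥ ε ω)) j|} = ε ⁻¹' {x | δ ≤ |∑ i, c * A i j * x i|} := by
    ext ω
    simp [mulVec, dotProduct, Finset.mul_sum, mul_assoc]
  have hmeas : MeasurableSet {x : ι → ℝ | δ ≤ |∑ i, c * A i j * x i|} :=
    measurableSet_le measurable_const (by fun_prop)
  have hgram : c * (c • (Aᵀ * A)) j j = ∑ i, (c * A i j) ^ 2 := by
    simp only [Matrix.smul_apply, Matrix.mul_apply, transpose_apply, smul_eq_mul, Finset.mul_sum]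
    exact Finset.sum_congr rfl fun i _ ↦ by ring
  rw [hset, ← Measure.map_apply_of_aemeasurable hεm hmeas, hε, hgram]
  exact measure_pi_gaussianReal_le_abs_sum_le v _ hδ

theorem tendstoInMeasure_smul_transpose_mulVec_gaussian [Fintype κ] {α : Type*} {l : Filter α}
    {ι : α → Type*} [∀ n, Fintype (ι n)] (A : (n : α) → Matrix (ι n) κ ℝ)
    (ε : (n : α) → Ω → ι n → ℝ)
    (hε : ∀ n, P.map (ε n) = Measure.pi fun _ ↦ gaussianReal 0 v)
    {c : α → ℝ} (hc : Tendsto c l (𝓝 0)) {C : Matrix κ κ ℝ}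
    (hgram : Tendsto (fun n ↦ c n • ((A n)ᵀ * A n)) l (𝓝 C)) :
    TendstoInMeasure P (fun n ω ↦ c n • ((A n)ᵀ *ᵥ ε n ω)) l 0 := by
  refine tendstoInMeasure_iff_dist.2 fun δ hδ ↦ ?_
  have hbound : ∀ n, P {ω | δ ≤ dist (c n • ((A n)ᵀ *ᵥ ε n ω)) 0}
      ≤ ∑ j, ENNReal.ofReal (c n * (c n • ((A n)ᵀ * A n)) j j * v / δ ^ 2) := by
    intro n
    have hcover : {ω | δ ≤ dist (c n • ((A n)ᵀ *ᵥ ε n ω)) 0}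
        ⊆ ⋃ j, {ω | δ ≤ |(c n • ((A n)ᵀ *ᵥ ε n ω)) j|} := by
      intro ω hω
      by_contra hnot
      simp only [Set.mem_iUnion, Set.mem_ofPred_eq, not_exists, not_le] at hω hnot
      exact hω.not_gt ((dist_pi_lt_iff hδ).2 fun j ↦ by simpa [Real.dist_eq] using hnot j)
    exact (measure_mono hcover).trans <| (measure_iUnion_fintype_le P _).trans <|
      Finset.sum_le_sum fun j _ ↦ measure_le_abs_smul_transpose_mulVec_le (hε n) _ _ j hδ
  have hlim : Tendsto (fun n ↦ ∑ j, ENNReal.ofReal (c n * (c n • ((A n)ᵀ * A n)) j j * v / δ ^ 2))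
      l (𝓝 0) := by
    have hentry : ∀ j, Tendsto (fun n ↦ (c n • ((A n)ᵀ * A n)) j j) l (𝓝 (C j j)) := fun j ↦
      (hgram.apply_nhds j).apply_nhds j
    simpa using tendsto_finsetSum Finset.univ fun j _ ↦
      ENNReal.tendsto_ofReal (((hc.mul (hentry j)).mul_const (v : ℝ)).div_const (δ ^ 2))
  exact tendsto_of_tendsto_of_tendsto_of_le_of_le tendsto_const_nhds hlim (fun _ ↦ zero_le)
    hbound

end GaussianNoise

theorem mul_abs_apply_le_of_tendsto {α κ : Type*} [Fintype κ] {l : Filter α} [l.NeBot]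
    {a : α → ℝ} {M : α → Matrix κ κ ℝ} {V b : α → κ → ℝ} {a₀ : ℝ} {C : Matrix κ κ ℝ}
    {β : κ → ℝ} (ha : Tendsto a l (𝓝 a₀)) (hM : Tendsto M l (𝓝 C)) (hV : Tendsto V l (𝓝 0))
    (hb : Tendsto b l (𝓝 β)) (j : κ) (h : ∀ k, a k * |b k j| ≤ β ⬝ᵥ (M k *ᵥ β) / 2 + V k ⬝ᵥ b k) :
    a₀ * |β j| ≤ β ⬝ᵥ (C *ᵥ β) / 2 := by
  have hquad : Tendsto (fun k ↦ β ⬝ᵥ (M k *ᵥ β) / 2) l (𝓝 (β ⬝ᵥ (C *ᵥ β) / 2)) :=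
    (((continuous_const.dotProduct (continuous_id.matrix_mulVec continuous_const)).tendsto C).comp
      hM).div_const 2
  have hcross : Tendsto (fun k ↦ V k ⬝ᵥ b k) l (𝓝 0) := by
    have := ((continuous_fst.dotProduct continuous_snd).tendsto ((0 : κ → ℝ), β)).comp
      (hV.prodMk_nhds hb)
    simpa [Function.comp_def] using this
  simpa using le_of_tendsto_of_tendsto' (ha.mul ((hb.apply_nhds j).abs)) (hquad.add hcross) h

theorem slope_not_strongly_consistent_general {Ω : Type*} [MeasurableSpace Ω]
    (P : Measure Ω) [IsProbabilityMeasure P] {p : ℕ} (hp : 0 < p)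
    (X : (n : ℕ) → Matrix (Fin (n + 1)) (Fin p) ℝ)
    (σ : NNReal)
    (ε : (n : ℕ) → Ω → (Fin (n + 1) → ℝ))
    (hε : ∀ n, Measure.map (ε n) P =
      Measure.pi (fun _ : Fin (n + 1) => gaussianReal 0 (σ ^ 2)))
    (β : Fin p → ℝ)
    (Y : (n : ℕ) → Ω → (Fin (n + 1) → ℝ))
    (hY : ∀ n ω, Y n ω = X n *ᵥ β + ε n ω)
    (C : Matrix (Fin p) (Fin p) ℝ)
    (hlim : Tendsto (fun n : ℕ => (1 / ((n : ℝ) + 1)) • ((X n)ᵀ * X n)) atTop (𝓝 C))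
    (Λ : ℕ → Fin p → ℝ) (hΛnonneg : ∀ n i, 0 ≤ Λ n i)
    (lam0 : ℝ) (hlamn : Tendsto (fun n : ℕ => Λ n ⟨0, hp⟩ / ((n : ℝ) + 1)) atTop (𝓝 lam0))
    (hβ : β ⬝ᵥ (C *ᵥ β) / 2 < lam0 * ⨆ i, |β i|)
    (βS : (n : ℕ) → Ω → (Fin p → ℝ))
    (hβS : ∀ n ω b, slopeObj (X n) (Y n ω) (Λ n) (βS n ω) ≤ slopeObj (X n) (Y n ω) (Λ n) b) :
    ¬ (∀ᵐ ω ∂P, Tendsto (fun n => βS n ω) atTop (𝓝 β)) := by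
  intro hconsistent
  obtain ⟨ns, hns, hnoise⟩ := (tendstoInMeasure_smul_transpose_mulVec_gaussian X ε hε
    tendsto_one_div_add_atTop_nhds_zero_nat hlim).exists_seq_tendsto_ae
  obtain ⟨ω, hβSω, hnoiseω⟩ := (hconsistent.and hnoise).exists
  have hbasic : ∀ n j, Λ n ⟨0, hp⟩ / ((n : ℝ) + 1) * |βS n ω j|
      ≤ β ⬝ᵥ (((1 / ((n : ℝ) + 1)) • ((X n)ᵀ * X n)) *ᵥ β) / 2
        + ((1 / ((n : ℝ) + 1)) • ((X n)ᵀ *ᵥ ε n ω)) ⬝ᵥ βS n ω := fun n ↦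
    div_mul_abs_le_of_slopeObj_le hp (X n) (ε n ω) (hΛnonneg n) β (βS n ω)
      (hY n ω ▸ hβS n ω) (by positivity)
  have : Nonempty (Fin p) := ⟨⟨0, hp⟩⟩
  obtain ⟨j, hj⟩ := exists_eq_ciSup_of_finite (f := fun i ↦ |β i|)
  have hsub := hns.tendsto_atTop
  have hlimit := mul_abs_apply_le_of_tendsto (hlamn.comp hsub) (hlim.comp hsub) hnoiseω
    (hβSω.comp hsub) j fun k ↦ hbasic (ns k) j
  rw [← hj] at hβ
  linarith

/-- Failure of strong consistency of SLOPE when `λ₁⁽ⁿ⁾/n → λ₀ > 0`: in the sequence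
of linear models `Y⁽ⁿ⁾ = X⁽ⁿ⁾β + ε⁽ⁿ⁾` (with `n ≥ 1` encoded as `n + 1`
observations), with deterministic full-column-rank designs, errors
`ε⁽ⁿ⁾ ~ N(0, σ²Iₙ)` and `n⁻¹(X⁽ⁿ⁾)ᵀX⁽ⁿ⁾ → C` positive definite, for any nonzero
true parameter `β` with `λ₀‖β‖_∞ > β'Cβ/2`, the SLOPE estimators do not converge
to `β` almost surely. -/
theorem slope_not_strongly_consistent {Ω : Type*} [MeasurableSpace Ω]
    (P : Measure Ω) [IsProbabilityMeasure P] {p : ℕ} (hp : 0 < p)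
    (X : (n : ℕ) → Matrix (Fin (n + 1)) (Fin p) ℝ)
    (hrank : ∀ n, p ≤ n + 1 → (X n).rank = p)
    (σ : NNReal) (hσ : 0 < σ)
    (ε : (n : ℕ) → Ω → (Fin (n + 1) → ℝ))
    (hε : ∀ n, Measure.map (ε n) P =
      Measure.pi (fun _ : Fin (n + 1) => gaussianReal 0 (σ ^ 2)))
    (β : Fin p → ℝ) (hβne : β ≠ 0)
    (Y : (n : ℕ) → Ω → (Fin (n + 1) → ℝ))
    (hY : ∀ n ω, Y n ω = X n *ᵥ β + ε n ω)
    (C : Matrix (Fin p) (Fin p) ℝ) (hC : C.PosDef)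
    (hlim : Tendsto (fun n : ℕ => (1 / ((n : ℝ) + 1)) • ((X n)ᵀ * X n)) atTop (𝓝 C))
    (Λ : ℕ → Fin p → ℝ) (hΛanti : ∀ n, Antitone (Λ n))
    (hΛnonneg : ∀ n i, 0 ≤ Λ n i) (hlam1 : ∀ n, 0 < Λ n ⟨0, hp⟩)
    (lam0 : ℝ) (hlam0 : 0 < lam0)
    (hlamn : Tendsto (fun n : ℕ => Λ n ⟨0, hp⟩ / ((n : ℝ) + 1)) atTop (𝓝 lam0))
    (hβ : β ⬝ᵥ (C *ᵥ β) / 2 < lam0 * ⨆ i, |β i|)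
    (βS : (n : ℕ) → Ω → (Fin p → ℝ))
    (hβS : ∀ n ω b, slopeObj (X n) (Y n ω) (Λ n) (βS n ω) ≤ slopeObj (X n) (Y n ω) (Λ n) b) :
    ¬ (∀ᵐ ω ∂P, Tendsto (fun n => βS n ω) atTop (𝓝 β)) :=
  slope_not_strongly_consistent_general P hp X σ ε hε β Y hY C hlim Λ hΛnonneg lam0 hlamn hβ βS hβS
end
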